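/- arXiv:1907.05476 — 10 statements merged into one kernel-verified Lean document; each statement's English description precedes it below -/
import Mathlib

section
/- Fix a $d\times d$ positive definite covariance matrix $\Sigma$ and consider the family of Gaussian densities $h_\mu(z) = ((2\pi)^d |\Sigma|)^{-1/2} \exp(-\frac{1}{2}(z-\mu)^T\Sigma^{-1}(z-\mu))$ parameterized by $\mu \in \mathbb{R}^d$. For any distribution $D$ on a bounded subset of $\mathbb{R}^d$, the expected negative log-likelihood risk of the maximum-likelihood estimator $\mu_n = \frac{1}{n}\sum_{i=1}^n z_i$ (expectation over i.i.d. samples $z_1,\dots,z_n \sim D$ and test point $z \sim D$) is nonincreasing in $n$; i.e., for all $n \geq 1$, $\mathbb{E}[-\log h_{\mu_{n+1}}(z)] \leq \mathbb{E}[-\log h_{\mu_n}(z)]$. -/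
open MeasureTheory Matrix Real

section PsdSqrtPort
open scoped MatrixOrder

noncomputable def Matrix.PosSemidef.sqrt {d : ℕ} {A : Matrix (Fin d) (Fin d) ℝ}
    (_ : A.PosSemidef) : Matrix (Fin d) (Fin d) ℝ := CFC.sqrt A

lemma Matrix.PosSemidef.sqrt_mul_self {d : ℕ} {A : Matrix (Fin d) (Fin d) ℝ}
    (hA : A.PosSemidef) : hA.sqrt * hA.sqrt = A :=
  CFC.sqrt_mul_sqrt_self A hA.nonneg

lemma Matrix.PosSemidef.posSemidef_sqrt {d : ℕ} {A : Matrix (Fin d) (Fin d) ℝ}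
    (hA : A.PosSemidef) : hA.sqrt.PosSemidef :=
  (CFC.sqrt_nonneg A).posSemidef

end PsdSqrtPort

private lemma quad_eq_sum_sq {d : ℕ} {A : Matrix (Fin d) (Fin d) ℝ} (hA : A.PosSemidef)
    (u : Fin d → ℝ) :
    u ⬝ᵥ (A *ᵥ u) = ∑ i, ((hA.sqrt *ᵥ u) i) ^ 2 := by
  have hS : hA.sqrt * hA.sqrt = A := hA.sqrt_mul_self
  have hsym : hA.sqrtᵀ = hA.sqrt := by
    rw [← Matrix.conjTranspose_eq_transpose_of_trivial]
    exact hA.posSemidef_sqrt.1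
  calc u ⬝ᵥ (A *ᵥ u) = u ⬝ᵥ (hA.sqrt *ᵥ (hA.sqrt *ᵥ u)) := by
        rw [Matrix.mulVec_mulVec, hS]
    _ = (u ᵥ* hA.sqrt) ⬝ᵥ (hA.sqrt *ᵥ u) := Matrix.dotProduct_mulVec _ _ _
    _ = (hA.sqrt *ᵥ u) ⬝ᵥ (hA.sqrt *ᵥ u) := by rw [← Matrix.mulVec_transpose, hsym]
    _ = ∑ i, ((hA.sqrt *ᵥ u) i) ^ 2 := by
        simp [dotProduct, sq]

private lemma scalar_jensen {m : ℕ} {a : ℝ} (ha : 0 ≤ a) (hma : (m : ℝ) * a = 1)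
    (x : Fin m → ℝ) : (∑ j, a * x j) ^ 2 ≤ ∑ j, a * (x j) ^ 2 := by
  have h := Finset.sum_mul_sq_le_sq_mul_sq Finset.univ (fun _ : Fin m => Real.sqrt a)
    (fun j => Real.sqrt a * x j)
  have hs : Real.sqrt a * Real.sqrt a = a := Real.mul_self_sqrt ha
  calc (∑ j, a * x j) ^ 2 = (∑ j, Real.sqrt a * (Real.sqrt a * x j)) ^ 2 := by
        congr 1
        exact Finset.sum_congr rfl fun j _ => by rw [← mul_assoc, hs]
    _ ≤ (∑ _j : Fin m, Real.sqrt a ^ 2) * ∑ j, (Real.sqrt a * x j) ^ 2 := h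
    _ = ∑ j, a * (x j) ^ 2 := by
        rw [Finset.sum_const, Finset.card_univ, Fintype.card_fin, nsmul_eq_mul,
          Real.sq_sqrt ha, hma, one_mul]
        exact Finset.sum_congr rfl fun j _ => by rw [mul_pow, Real.sq_sqrt ha]

private lemma quad_jensen {d m : ℕ} {A : Matrix (Fin d) (Fin d) ℝ} (hA : A.PosSemidef)
    {a : ℝ} (ha : 0 ≤ a) (hma : (m : ℝ) * a = 1) (v : Fin m → (Fin d → ℝ)) :
    (∑ j, a • v j) ⬝ᵥ (A *ᵥ ∑ j, a • v j) ≤ ∑ j, a * (v j ⬝ᵥ (A *ᵥ v j)) := by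
  have hco : ∀ i, (hA.sqrt *ᵥ (∑ j, a • v j)) i = ∑ j, a * ((hA.sqrt *ᵥ v j) i) := by
    intro i
    simp only [Matrix.mulVec, dotProduct, Finset.sum_apply, Pi.smul_apply,
      smul_eq_mul, Finset.mul_sum]
    rw [Finset.sum_comm]
    exact Finset.sum_congr rfl fun j _ => Finset.sum_congr rfl fun k _ => by ring
  calc (∑ j, a • v j) ⬝ᵥ (A *ᵥ ∑ j, a • v j)
      = ∑ i, ((hA.sqrt *ᵥ (∑ j, a • v j)) i) ^ 2 := quad_eq_sum_sq hA _
    _ = ∑ i, (∑ j, a * ((hA.sqrt *ᵥ v j) i)) ^ 2 := by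
        exact Finset.sum_congr rfl fun i _ => by rw [hco i]
    _ ≤ ∑ i, ∑ j, a * ((hA.sqrt *ᵥ v j) i) ^ 2 :=
        Finset.sum_le_sum fun i _ => scalar_jensen ha hma _
    _ = ∑ j, a * (v j ⬝ᵥ (A *ᵥ v j)) := by
        rw [Finset.sum_comm]
        exact Finset.sum_congr rfl fun j _ => by
          rw [quad_eq_sum_sq hA, Finset.mul_sum]

private lemma mean_norm_le {d m : ℕ} {R : ℝ} (hR : 0 ≤ R) (u : Fin m → (Fin d → ℝ))
    (hu : ∀ i, ‖u i‖ ≤ R) : ‖(m : ℝ)⁻¹ • ∑ i, u i‖ ≤ R := by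
  rcases Nat.eq_zero_or_pos m with h | h
  · subst h; simpa using hR
  · have hm : (0 : ℝ) < m := by exact_mod_cast h
    have hsum : ‖∑ i, u i‖ ≤ (m : ℝ) * R := by
      calc ‖∑ i : Fin m, u i‖ ≤ ∑ i : Fin m, ‖u i‖ := norm_sum_le _ _
        _ ≤ ∑ _i : Fin m, R := Finset.sum_le_sum fun i _ => hu i
        _ = (m : ℝ) * R := by
            rw [Finset.sum_const, Finset.card_univ, Fintype.card_fin, nsmul_eq_mul]
    rw [norm_smul, Real.norm_eq_abs, abs_of_pos (by positivity)]
    calc (m : ℝ)⁻¹ * ‖∑ i, u i‖ ≤ (m : ℝ)⁻¹ * ((m : ℝ) * R) := by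
          exact mul_le_mul_of_nonneg_left hsum (by positivity)
      _ = R := by field_simp

private lemma quad_abs_le {d : ℕ} (A : Matrix (Fin d) (Fin d) ℝ) (v : Fin d → ℝ) :
    |v ⬝ᵥ (A *ᵥ v)| ≤ (∑ i, ∑ k, |A i k|) * ‖v‖ ^ 2 := by
  have h1 : ∀ i, |v i| ≤ ‖v‖ := fun i => by
    simpa [Real.norm_eq_abs] using norm_le_pi_norm v i
  have hv0 : (0 : ℝ) ≤ ‖v‖ := norm_nonneg v
  calc |v ⬝ᵥ (A *ᵥ v)| = |∑ i, ∑ k, v i * (A i k * v k)| := by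
        simp [dotProduct, Matrix.mulVec, Finset.mul_sum]
    _ ≤ ∑ i, |∑ k, v i * (A i k * v k)| := Finset.abs_sum_le_sum_abs _ _
    _ ≤ ∑ i, ∑ k, |v i * (A i k * v k)| :=
        Finset.sum_le_sum fun i _ => Finset.abs_sum_le_sum_abs _ _
    _ ≤ ∑ i, ∑ k, |A i k| * ‖v‖ ^ 2 := by
        refine Finset.sum_le_sum fun i _ => Finset.sum_le_sum fun k _ => ?_
        rw [abs_mul, abs_mul]
        have h2 : |v i| * |v k| ≤ ‖v‖ * ‖v‖ :=
          mul_le_mul (h1 i) (h1 k) (abs_nonneg _) hv0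
        calc |v i| * (|A i k| * |v k|) = |A i k| * (|v i| * |v k|) := by ring
          _ ≤ |A i k| * (‖v‖ * ‖v‖) := mul_le_mul_of_nonneg_left h2 (abs_nonneg _)
          _ = |A i k| * ‖v‖ ^ 2 := by ring
    _ = (∑ i, ∑ k, |A i k|) * ‖v‖ ^ 2 := by
        rw [Finset.sum_mul]
        exact Finset.sum_congr rfl fun i _ => (Finset.sum_mul _ _ _).symm

private lemma marg_integral {d n : ℕ} (D : Measure (Fin d → ℝ)) [IsProbabilityMeasure D]
    (j : Fin (n + 1)) (f : (Fin n → (Fin d → ℝ)) × (Fin d → ℝ) → ℝ)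
    (hf : AEStronglyMeasurable f ((Measure.pi fun _ : Fin n => D).prod D)) :
    ∫ w : (Fin (n + 1) → (Fin d → ℝ)) × (Fin d → ℝ),
        f (fun i => w.1 (j.succAbove i), w.2)
        ∂((Measure.pi fun _ : Fin (n + 1) => D).prod D)
      = ∫ w, f w ∂((Measure.pi fun _ : Fin n => D).prod D) := by
  have h2 := measurePreserving_piFinSuccAbove (fun _ : Fin (n + 1) => D) j
  have h3 : MeasurePreserving (Prod.snd)
      (D.prod (Measure.pi fun _ : Fin n => D)) (Measure.pi fun _ : Fin n => D) :=
    ⟨measurable_snd, by rw [Measure.map_snd_prod]; simp⟩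
  have h1 : MeasurePreserving (fun w : Fin (n + 1) → (Fin d → ℝ) => fun i => w (j.succAbove i))
      (Measure.pi fun _ : Fin (n + 1) => D) (Measure.pi fun _ : Fin n => D) := h3.comp h2
  have hΦ : MeasurePreserving
      (fun w : (Fin (n + 1) → (Fin d → ℝ)) × (Fin d → ℝ) =>
        ((fun i => w.1 (j.succAbove i), w.2) : (Fin n → (Fin d → ℝ)) × (Fin d → ℝ)))
      ((Measure.pi fun _ : Fin (n + 1) => D).prod D)
      ((Measure.pi fun _ : Fin n => D).prod D) := h1.prod (MeasurePreserving.id D)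
  rw [← hΦ.map_eq, integral_map hΦ.aemeasurable (by rwa [hΦ.map_eq])]

private lemma ae_coord_bound {d m : ℕ} (D : Measure (Fin d → ℝ)) [IsProbabilityMeasure D]
    {R : ℝ} (hR : ∀ᵐ z ∂D, ‖z‖ ≤ R) :
    ∀ᵐ w : (Fin m → (Fin d → ℝ)) × (Fin d → ℝ)
      ∂((Measure.pi fun _ : Fin m => D).prod D),
      (∀ i, ‖w.1 i‖ ≤ R) ∧ ‖w.2‖ ≤ R := by
  have hpi : ∀ᵐ w : Fin m → (Fin d → ℝ) ∂(Measure.pi fun _ : Fin m => D), ∀ i, ‖w i‖ ≤ R :=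
    (Filter.eventually_pi fun _ : Fin m => hR).filter_mono (Measure.ae_pi_le_pi)
  have h1 : ∀ᵐ w : (Fin m → (Fin d → ℝ)) × (Fin d → ℝ)
      ∂((Measure.pi fun _ : Fin m => D).prod D), ∀ i, ‖w.1 i‖ ≤ R :=
    Measure.quasiMeasurePreserving_fst.ae hpi
  have h2 : ∀ᵐ w : (Fin m → (Fin d → ℝ)) × (Fin d → ℝ)
      ∂((Measure.pi fun _ : Fin m => D).prod D), ‖w.2‖ ≤ R :=
    Measure.quasiMeasurePreserving_snd.ae hR
  exact h1.and h2

/-- Theorem 1 of the paper: For the Gaussian family with fixed positive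
definite covariance `Σ` and unknown mean, and any distribution `D` on a bounded subset of
`ℝ^d`, the expected negative log-likelihood risk of the ML estimator (the sample mean)
is nonincreasing in the sample size `n ≥ 1`. -/
theorem stmt_2 {d : ℕ} (D : Measure (Fin d → ℝ)) [IsProbabilityMeasure D]
    (hbdd : ∃ R : ℝ, ∀ᵐ z ∂D, ‖z‖ ≤ R)
    (Sig : Matrix (Fin d) (Fin d) ℝ) (hSig : Sig.PosDef)
    (ℓ : (Fin d → ℝ) → (Fin d → ℝ) → ℝ)
    (hℓ : ∀ z μ, ℓ z μ =
      -Real.log ((Real.sqrt ((2 * Real.pi) ^ d * Sig.det))⁻¹ *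
        Real.exp (-(1 / 2) * ((z - μ) ⬝ᵥ (Sig⁻¹ *ᵥ (z - μ))))))
    (risk : ℕ → ℝ)
    (hrisk : ∀ n : ℕ, risk n =
      ∫ w : (Fin n → (Fin d → ℝ)) × (Fin d → ℝ),
        ℓ w.2 ((n : ℝ)⁻¹ • ∑ i, w.1 i)
        ∂((Measure.pi fun _ : Fin n => D).prod D)) :
    ∀ n : ℕ, 1 ≤ n → risk (n + 1) ≤ risk n := by
  classical
  obtain ⟨R₀, hR₀⟩ := hbdd
  set R : ℝ := max R₀ 0 with hRdef
  have hR : ∀ᵐ z ∂D, ‖z‖ ≤ R := hR₀.mono fun z h => le_trans h (le_max_left _ _)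
  have hR0 : (0 : ℝ) ≤ R := le_max_right _ _
  have hApsd : (Sig⁻¹).PosSemidef := hSig.inv.posSemidef
  set K : ℝ := Real.log (Real.sqrt ((2 * Real.pi) ^ d * Sig.det)) with hKdef
  set CA : ℝ := ∑ i, ∑ k, |Sig⁻¹ i k| with hCAdef
  have hc : (0 : ℝ) < Real.sqrt ((2 * Real.pi) ^ d * Sig.det) :=
    Real.sqrt_pos.2 (mul_pos (pow_pos (by positivity) d) hSig.det_pos)
  have ℓeq : ∀ z μ, ℓ z μ = K + (1 / 2) * ((z - μ) ⬝ᵥ (Sig⁻¹ *ᵥ (z - μ))) := by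
    intro z μ
    rw [hℓ, Real.log_mul (by positivity) (Real.exp_ne_zero _), Real.log_inv, Real.log_exp,
      hKdef]
    ring
  set C₀ : ℝ := |K| + (1 / 2) * (CA * (2 * R) ^ 2) with hC₀def
  have hbound : ∀ z μ : Fin d → ℝ, ‖z‖ ≤ R → ‖μ‖ ≤ R → |ℓ z μ| ≤ C₀ := by
    intro z μ hz hμ
    rw [ℓeq]
    have hCA0 : 0 ≤ CA := Finset.sum_nonneg fun i _ => Finset.sum_nonneg fun k _ => abs_nonneg _
    have h1 : |(z - μ) ⬝ᵥ (Sig⁻¹ *ᵥ (z - μ))| ≤ CA * (2 * R) ^ 2 := by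
      refine (quad_abs_le _ _).trans ?_
      have hnle : ‖z - μ‖ ≤ 2 * R := (norm_sub_le _ _).trans (by linarith)
      have h2 : ‖z - μ‖ ^ 2 ≤ (2 * R) ^ 2 := by nlinarith [norm_nonneg (z - μ)]
      exact mul_le_mul_of_nonneg_left h2 hCA0
    calc |K + 1 / 2 * ((z - μ) ⬝ᵥ (Sig⁻¹ *ᵥ (z - μ)))|
        ≤ |K| + |1 / 2 * ((z - μ) ⬝ᵥ (Sig⁻¹ *ᵥ (z - μ)))| := abs_add_le _ _
      _ = |K| + 1 / 2 * |(z - μ) ⬝ᵥ (Sig⁻¹ *ᵥ (z - μ))| := by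
          rw [abs_mul]; norm_num
      _ ≤ C₀ := by rw [hC₀def]; linarith
  have hQcont : Continuous fun v : Fin d → ℝ => v ⬝ᵥ (Sig⁻¹ *ᵥ v) :=
    continuous_id.dotProduct (continuous_const.matrix_mulVec continuous_id)
  have hcont : ∀ (m M : ℕ) (σ : Fin m → Fin M) (c : ℝ),
      Continuous fun w : (Fin M → (Fin d → ℝ)) × (Fin d → ℝ) =>
        ℓ w.2 (c • ∑ i, w.1 (σ i)) := by
    intro m M σ c
    have hμ : Continuous fun w : (Fin M → (Fin d → ℝ)) × (Fin d → ℝ) =>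
        c • ∑ i, w.1 (σ i) :=
      (continuous_finset_sum _ fun i _ => (continuous_apply (σ i)).comp continuous_fst).const_smul c
    have hsub : Continuous fun w : (Fin M → (Fin d → ℝ)) × (Fin d → ℝ) =>
        w.2 - c • ∑ i : Fin m, w.1 (σ i) := continuous_snd.sub hμ
    simp only [ℓeq]
    exact continuous_const.add (continuous_const.mul (hQcont.comp hsub))
  have hint : ∀ (m M : ℕ) (σ : Fin m → Fin M),
      Integrable (fun w : (Fin M → (Fin d → ℝ)) × (Fin d → ℝ) =>
        ℓ w.2 ((m : ℝ)⁻¹ • ∑ i, w.1 (σ i)))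
        ((Measure.pi fun _ : Fin M => D).prod D) := by
    intro m M σ
    refine Integrable.mono' (integrable_const C₀)
      ((hcont m M σ _).aestronglyMeasurable) ?_
    filter_upwards [ae_coord_bound D hR (m := M)] with w hw
    rw [Real.norm_eq_abs]
    exact hbound _ _ hw.2 (mean_norm_le hR0 (fun i => w.1 (σ i)) (fun i => hw.1 (σ i)))
  intro n hn
  have hn' : (0 : ℝ) < n := by exact_mod_cast hn
  set a : ℝ := ((n : ℝ) + 1)⁻¹ with hadef
  have ha0 : (0 : ℝ) ≤ a := by positivity
  have hma : ((n + 1 : ℕ) : ℝ) * a = 1 := by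
    rw [hadef]; push_cast; field_simp
  have hcast : ((n + 1 : ℕ) : ℝ)⁻¹ = a := by rw [hadef]; push_cast; ring
  -- pointwise Jensen inequality
  have hn0 : (n : ℝ) ≠ 0 := ne_of_gt hn'
  have hn1 : (n : ℝ) + 1 ≠ 0 := by positivity
  have hpoint : ∀ w : (Fin (n + 1) → (Fin d → ℝ)) × (Fin d → ℝ),
      ℓ w.2 (((n + 1 : ℕ) : ℝ)⁻¹ • ∑ i, w.1 i)
        ≤ ∑ j : Fin (n + 1), a * ℓ w.2 ((n : ℝ)⁻¹ • ∑ i : Fin n, w.1 (j.succAbove i)) := by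
    intro w
    set v : Fin (n + 1) → (Fin d → ℝ) :=
      fun j => w.2 - (n : ℝ)⁻¹ • ∑ i : Fin n, w.1 (j.succAbove i) with hvdef
    have hvec : w.2 - ((n + 1 : ℕ) : ℝ)⁻¹ • ∑ i, w.1 i = ∑ j, a • v j := by
      funext x
      have hS : ∀ j : Fin (n + 1),
          ∑ i : Fin n, w.1 (j.succAbove i) x = (∑ k, w.1 k x) - w.1 j x := by
        intro j
        have h := Fin.sum_univ_succAbove (fun k => w.1 k x) j
        linarith
      simp only [hvdef, Pi.sub_apply, Pi.smul_apply, Finset.sum_apply, smul_eq_mul, hcast]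
      simp only [hS]
      calc w.2 x - a * ∑ i, w.1 i x
          = ((n : ℝ) + 1) * (a * w.2 x - a * (n : ℝ)⁻¹ * ∑ k, w.1 k x)
              + a * (n : ℝ)⁻¹ * ∑ k, w.1 k x := by
            rw [hadef]; field_simp; ring
        _ = ∑ j : Fin (n + 1),
              ((a * w.2 x - a * (n : ℝ)⁻¹ * ∑ k, w.1 k x) + a * (n : ℝ)⁻¹ * w.1 j x) := by
            rw [Finset.sum_add_distrib, Finset.sum_const, Finset.card_univ, Fintype.card_fin,
              ← Finset.mul_sum, nsmul_eq_mul]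
            push_cast
            ring
        _ = ∑ j : Fin (n + 1), a * (w.2 x - (n : ℝ)⁻¹ * ((∑ k, w.1 k x) - w.1 j x)) :=
            Finset.sum_congr rfl fun j _ => by ring
    have hq := quad_jensen hApsd ha0 hma v
    have hℓj : ∀ j : Fin (n + 1),
        ℓ w.2 ((n : ℝ)⁻¹ • ∑ i : Fin n, w.1 (j.succAbove i))
          = K + (1 / 2) * (v j ⬝ᵥ (Sig⁻¹ *ᵥ v j)) := fun j => ℓeq _ _
    have hsum : ∑ j : Fin (n + 1), a * ℓ w.2 ((n : ℝ)⁻¹ • ∑ i : Fin n, w.1 (j.succAbove i))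
        = K + (1 / 2) * ∑ j, a * (v j ⬝ᵥ (Sig⁻¹ *ᵥ v j)) := by
      calc ∑ j : Fin (n + 1), a * ℓ w.2 ((n : ℝ)⁻¹ • ∑ i : Fin n, w.1 (j.succAbove i))
          = ∑ j : Fin (n + 1), (a * K + (1 / 2) * (a * (v j ⬝ᵥ (Sig⁻¹ *ᵥ v j)))) :=
            Finset.sum_congr rfl fun j _ => by rw [hℓj j]; ring
        _ = (n + 1) • (a * K) + (1 / 2) * ∑ j, a * (v j ⬝ᵥ (Sig⁻¹ *ᵥ v j)) := by
            rw [Finset.sum_add_distrib, Finset.sum_const, Finset.card_univ, Fintype.card_fin,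
              ← Finset.mul_sum]
        _ = K + (1 / 2) * ∑ j, a * (v j ⬝ᵥ (Sig⁻¹ *ᵥ v j)) := by
            rw [nsmul_eq_mul, ← mul_assoc, hma, one_mul]
    rw [ℓeq, hsum, hvec]
    linarith [hq]
  have hFint : Integrable (fun w : (Fin (n + 1) → (Fin d → ℝ)) × (Fin d → ℝ) =>
      ℓ w.2 (((n + 1 : ℕ) : ℝ)⁻¹ • ∑ i, w.1 i))
      ((Measure.pi fun _ : Fin (n + 1) => D).prod D) :=
    hint (n + 1) (n + 1) (fun i => i)
  have hGint : ∀ j : Fin (n + 1),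
      Integrable (fun w : (Fin (n + 1) → (Fin d → ℝ)) × (Fin d → ℝ) =>
        ℓ w.2 ((n : ℝ)⁻¹ • ∑ i : Fin n, w.1 (j.succAbove i)))
        ((Measure.pi fun _ : Fin (n + 1) => D).prod D) :=
    fun j => hint n (n + 1) j.succAbove
  rw [hrisk (n + 1), hrisk n]
  calc ∫ w : (Fin (n + 1) → (Fin d → ℝ)) × (Fin d → ℝ),
        ℓ w.2 (((n + 1 : ℕ) : ℝ)⁻¹ • ∑ i, w.1 i)
        ∂((Measure.pi fun _ : Fin (n + 1) => D).prod D)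
      ≤ ∫ w : (Fin (n + 1) → (Fin d → ℝ)) × (Fin d → ℝ),
          ∑ j : Fin (n + 1), a * ℓ w.2 ((n : ℝ)⁻¹ • ∑ i : Fin n, w.1 (j.succAbove i))
          ∂((Measure.pi fun _ : Fin (n + 1) => D).prod D) :=
        integral_mono hFint
          (integrable_finset_sum _ fun j _ => (hGint j).const_mul a) hpoint
    _ = ∑ j : Fin (n + 1), a *
          ∫ w : (Fin (n + 1) → (Fin d → ℝ)) × (Fin d → ℝ),
            ℓ w.2 ((n : ℝ)⁻¹ • ∑ i : Fin n, w.1 (j.succAbove i))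
            ∂((Measure.pi fun _ : Fin (n + 1) => D).prod D) := by
        rw [integral_finset_sum _ fun j _ => (hGint j).const_mul a]
        exact Finset.sum_congr rfl fun j _ => integral_const_mul a _
    _ = ∑ _j : Fin (n + 1), a *
          ∫ w : (Fin n → (Fin d → ℝ)) × (Fin d → ℝ),
            ℓ w.2 ((n : ℝ)⁻¹ • ∑ i, w.1 i)
            ∂((Measure.pi fun _ : Fin n => D).prod D) := by
        refine Finset.sum_congr rfl fun j _ => ?_
        congr 1
        exact marg_integral D j
          (fun w => ℓ w.2 ((n : ℝ)⁻¹ • ∑ i, w.1 i))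
          ((hcont n n (fun i => i) ((n : ℝ)⁻¹)).aestronglyMeasurable)
    _ = ∫ w : (Fin n → (Fin d → ℝ)) × (Fin d → ℝ),
          ℓ w.2 ((n : ℝ)⁻¹ • ∑ i, w.1 i)
          ∂((Measure.pi fun _ : Fin n => D).prod D) := by
        rw [Finset.sum_const, Finset.card_univ, Fintype.card_fin, nsmul_eq_mul,
          ← mul_assoc, hma, one_mul]
end

section
/- With the setup of the two-point domain $\mathcal{Z}=\{a,b\}$ and risk polynomial $R_n(q) = \sum_{k=0}^n \binom{n}{k} q^k (1-q)^{n-k} (q\,\ell(a,h^k_{n-k}) + (1-q)\,\ell(b,h^k_{n-k}))$: if $\ell(a,h_n^0) = \ell(a,h_{n+1}^0)$, $\ell(b,h_n^0) = \ell(b,h_{n+1}^0)$, and $-\ell(b,h_{n+1}^0) + (n+1)\ell(b,h_n^1) - n\ell(b,h_{n-1}^1) > 0$, then there exists $q \in (0,1)$ such that $R_{n+1}(q) > R_n(q)$, i.e., the learner is not risk-monotonic at sample size $n$ for the distribution $D_q$. -/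
open Finset Filter Topology

/-- Derivative at `0` of a single term of the risk polynomial. -/
private lemma term_hasDerivAt (C A B : ℝ) (m k : ℕ) :
    HasDerivAt (fun q : ℝ => C * q ^ k * (1 - q) ^ m * (q * A + (1 - q) * B))
      ((C * ((k : ℝ) * 0 ^ (k - 1)) * (1 - 0) ^ m +
        C * 0 ^ k * ((m : ℝ) * (1 - 0) ^ (m - 1) * (-1))) * (0 * A + (1 - 0) * B) +
        C * 0 ^ k * (1 - 0) ^ m * (A + (-1) * B)) 0 := by
  have h1 : HasDerivAt (fun q : ℝ => 1 - q) (-1) 0 := (hasDerivAt_id 0).const_sub 1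
  have hu : HasDerivAt (fun q : ℝ => C * q ^ k) (C * ((k : ℝ) * 0 ^ (k - 1))) 0 :=
    (hasDerivAt_pow k 0).const_mul C
  have hv : HasDerivAt (fun q : ℝ => (1 - q) ^ m) ((m : ℝ) * (1 - 0) ^ (m - 1) * (-1)) 0 :=
    h1.pow m
  have hw : HasDerivAt (fun q : ℝ => q * A + (1 - q) * B) (A + (-1) * B) 0 := by
    have := (hasDerivAt_mul_const (x := (0:ℝ)) A).add (h1.mul_const B)
    exact this
  have := (hu.mul hv).mul hw
  exact this

/-- Derivative at `0` of the risk polynomial `R N`. -/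
private lemma risk_hasDerivAt (A B : ℕ → ℝ) (N : ℕ) (hN : 1 ≤ N) :
    HasDerivAt (fun q : ℝ => ∑ k ∈ Finset.range (N + 1),
      (N.choose k : ℝ) * q ^ k * (1 - q) ^ (N - k) * (q * A k + (1 - q) * B k))
      ((N : ℝ) * B 1 + (A 0 - B 0 - (N : ℝ) * B 0)) 0 := by
  set d : ℕ → ℝ := fun k =>
    (((N.choose k : ℝ)) * ((k : ℝ) * 0 ^ (k - 1)) * (1 - 0) ^ (N - k) +
      (N.choose k : ℝ) * 0 ^ k * (((N - k : ℕ) : ℝ) * (1 - 0) ^ (N - k - 1) * (-1))) *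
        (0 * A k + (1 - 0) * B k) +
      (N.choose k : ℝ) * 0 ^ k * (1 - 0) ^ (N - k) * (A k + (-1) * B k) with hd
  have hsum : HasDerivAt (fun q : ℝ => ∑ k ∈ Finset.range (N + 1),
      (N.choose k : ℝ) * q ^ k * (1 - q) ^ (N - k) * (q * A k + (1 - q) * B k))
      (∑ k ∈ Finset.range (N + 1), d k) 0 :=
    HasDerivAt.fun_sum fun k _ => term_hasDerivAt _ _ _ _ _
  have hval : ∑ k ∈ Finset.range (N + 1), d k
      = (N : ℝ) * B 1 + (A 0 - B 0 - (N : ℝ) * B 0) := by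
    obtain ⟨M, rfl⟩ : ∃ M, N = M + 1 := ⟨N - 1, (Nat.succ_pred_eq_of_pos hN).symm⟩
    rw [Finset.sum_range_succ' d, Finset.sum_range_succ' (fun i => d (i + 1))]
    have hz : ∀ i ∈ Finset.range M, d (i + 1 + 1) = 0 := by
      intro i _
      simp [hd, zero_pow]
    rw [Finset.sum_eq_zero hz]
    have h0 : d 0 = A 0 - B 0 - ((M : ℝ) + 1) * B 0 := by
      simp [hd]; ring
    have h1 : d 1 = ((M : ℝ) + 1) * B 1 := by
      have : (M + 1).choose 1 = M + 1 := Nat.choose_one_right _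
      simp [hd, this, zero_pow]
    rw [h0, h1]
    push_cast
    ring
  rw [hval] at hsum
  exact hsum

/-- Value at `0` of the risk polynomial. -/
private lemma risk_at_zero (A B : ℕ → ℝ) (N : ℕ) :
    ∑ k ∈ Finset.range (N + 1),
      (N.choose k : ℝ) * (0:ℝ) ^ k * (1 - 0) ^ (N - k) * (0 * A k + (1 - 0) * B k) = B 0 := by
  rw [Finset.sum_eq_single_of_mem 0 (Finset.mem_range.2 (Nat.succ_pos N))]
  · simp
  · intro k _ hk
    simp [zero_pow hk]

/-- Lemma 4 of the paper: With the two-point risk polynomial `R n q`, if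
`ℓ(a,h⁰_n) = ℓ(a,h⁰_{n+1})`, `ℓ(b,h⁰_n) = ℓ(b,h⁰_{n+1})` and
`-ℓ(b,h⁰_{n+1}) + (n+1)ℓ(b,h¹_n) - n ℓ(b,h¹_{n-1}) > 0`, then there exists `q ∈ (0,1)`
with `R (n+1) q > R n q`, i.e. the learner is not risk-monotonic at sample size `n`. -/
theorem stmt_4 {Z H : Type*} (a b : Z) (ℓ : Z → H → ℝ)
    (h : ℕ → ℕ → H)  -- `h k m` : output on `k` copies of `a` and `m` copies of `b`
    (R : ℕ → ℝ → ℝ)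
    (hR : ∀ (n : ℕ) (q : ℝ), R n q = ∑ k ∈ Finset.range (n + 1),
      (n.choose k : ℝ) * q ^ k * (1 - q) ^ (n - k) *
        (q * ℓ a (h k (n - k)) + (1 - q) * ℓ b (h k (n - k))))
    (n : ℕ) (hn : 1 ≤ n)
    (heqa : ℓ a (h 0 n) = ℓ a (h 0 (n + 1)))
    (heqb : ℓ b (h 0 n) = ℓ b (h 0 (n + 1)))
    (hpos : 0 < -ℓ b (h 0 (n + 1)) + (n + 1 : ℝ) * ℓ b (h 1 n) - (n : ℝ) * ℓ b (h 1 (n - 1))) :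
    ∃ q : ℝ, 0 < q ∧ q < 1 ∧ R n q < R (n + 1) q := by
  set f : ℝ → ℝ := fun q => R (n + 1) q - R n q with hf
  -- the derivative of `f` at 0
  set c : ℝ := -ℓ b (h 0 (n + 1)) + (n + 1 : ℝ) * ℓ b (h 1 n) - (n : ℝ) * ℓ b (h 1 (n - 1))
    with hc
  have hderiv : HasDerivAt f c 0 := by
    have hA := risk_hasDerivAt (fun k => ℓ a (h k (n + 1 - k))) (fun k => ℓ b (h k (n + 1 - k)))
      (n + 1) (Nat.le_add_left 1 n)
    have hB := risk_hasDerivAt (fun k => ℓ a (h k (n - k))) (fun k => ℓ b (h k (n - k)))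
      n hn
    have hA' := hA.congr_of_eventuallyEq (Filter.Eventually.of_forall fun q => (hR (n + 1) q))
    have hB' := hB.congr_of_eventuallyEq (Filter.Eventually.of_forall fun q => (hR n q))
    have := hA'.sub hB'
    convert this using 1
    · rfl
    · rfl
    · rfl
    rw [hc]
    have e1 : n + 1 - 1 = n := rfl
    have e2 : n + 1 - 0 = n + 1 := rfl
    simp only [e1, e2, Nat.sub_zero]
    rw [heqa, heqb]
    push_cast
    ring
  have hf0 : f 0 = 0 := by
    have r1 : R n 0 = ℓ b (h 0 n) := by
      rw [hR]; simpa using risk_at_zero (fun k => ℓ a (h k (n - k))) (fun k => ℓ b (h k (n - k))) n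
    have r2 : R (n + 1) 0 = ℓ b (h 0 (n + 1)) := by
      rw [hR]
      simpa using risk_at_zero (fun k => ℓ a (h k (n + 1 - k)))
        (fun k => ℓ b (h k (n + 1 - k))) (n + 1)
    simp [hf, r1, r2, heqb]
  -- slope argument
  rw [hasDerivAt_iff_tendsto_slope] at hderiv
  have hmem : ∀ᶠ q in 𝓝[≠] (0:ℝ), 0 < slope f 0 q := hderiv (Ioi_mem_nhds hpos)
  have hmono : 𝓝[>] (0:ℝ) ≤ 𝓝[≠] (0:ℝ) :=
    nhdsWithin_mono _ fun x hx => ne_of_gt hx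
  have hlt1 : ∀ᶠ q in 𝓝[>] (0:ℝ), q < 1 :=
    eventually_nhdsWithin_of_eventually_nhds (eventually_lt_nhds one_pos)
  have hgt0 : ∀ᶠ q in 𝓝[>] (0:ℝ), 0 < q := self_mem_nhdsWithin
  have hall : ∀ᶠ q in 𝓝[>] (0:ℝ), 0 < slope f 0 q ∧ q < 1 ∧ 0 < q :=
    ((hmem.filter_mono hmono).and (hlt1.and hgt0))
  obtain ⟨q, hslope, hq1, hq0⟩ := hall.exists
  refine ⟨q, hq0, hq1, ?_⟩
  have : slope f 0 q = f q / q := by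
    simp [slope, hf0, div_eq_inv_mul]
  rw [this] at hslope
  have hfq : 0 < f q := by
    have := mul_pos hslope hq0
    rwa [div_mul_cancel₀ _ (ne_of_gt hq0)] at this
  simpa [hf] using sub_pos.mp hfq
end

section
/- Let $a_2 \neq 0$ and $a_1 \neq 0$ be fixed reals, and fix $b_2 \neq 0$. For $b_1 \in \mathbb{R}$, define $h_n(b_1) = \frac{a_1 a_2 + n b_1 b_2}{a_1^2 + n b_1^2}$ and $L_n(b_1) = (b_1 h_n(b_1) - b_2)^2$. Then $\lim_{b_1 \to 0} \big[ (n+1) L_n(b_1) - n L_{n-1}(b_1) \big] = b_2^2 > 0$. Consequently, for every $n \geq 1$ there exists $b_1 > 0$ with $(n+1) L_n(b_1) - n L_{n-1}(b_1) > 0$. -/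
/-! At `b1 = 0` the fitted line predicts `0` at `(b1, b2)`, so every loss `L m 0` equals `b2²`
and the gap `(n+1) L n - n L (n-1)` equals `b2²`. Since `a1 ≠ 0` keeps the denominator
`a1² + m b1²` positive, each `L m` is continuous, so the gap tends to `b2² > 0` as `b1 → 0⁺`
and is therefore positive at some small `b1 > 0`. -/

open Filter Topology

noncomputable section

namespace LeastSquares

def fitSlope (a1 a2 b1 b2 : ℝ) (m : ℕ) : ℝ :=
  (a1 * a2 + m * b1 * b2) / (a1 ^ 2 + m * b1 ^ 2)

def fitLoss (a1 a2 b1 b2 : ℝ) (m : ℕ) : ℝ :=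
  (b1 * fitSlope a1 a2 b1 b2 m - b2) ^ 2

variable {a1 : ℝ} (a2 b2 : ℝ)

@[simp]
theorem fitLoss_zero_left (m : ℕ) : fitLoss a1 a2 0 b2 m = b2 ^ 2 := by
  simp [fitLoss]

theorem continuous_fitLoss (ha1 : a1 ≠ 0) (m : ℕ) :
    Continuous fun b1 => fitLoss a1 a2 b1 b2 m := by
  unfold fitLoss fitSlope
  refine Continuous.pow (Continuous.sub ?_ continuous_const) 2
  exact continuous_id.mul (Continuous.div (by fun_prop) (by fun_prop) fun _ => by positivity)

theorem tendsto_fitLoss_gap_nhdsGT (ha1 : a1 ≠ 0) (n : ℕ) :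
    Tendsto (fun b1 => (n + 1 : ℝ) * fitLoss a1 a2 b1 b2 n - n * fitLoss a1 a2 b1 b2 (n - 1))
      (𝓝[>] 0) (𝓝 (b2 ^ 2)) := by
  have hgap : Continuous fun b1 =>
      (n + 1 : ℝ) * fitLoss a1 a2 b1 b2 n - n * fitLoss a1 a2 b1 b2 (n - 1) :=
    (continuous_const.mul (continuous_fitLoss a2 b2 ha1 n)).sub
      (continuous_const.mul (continuous_fitLoss a2 b2 ha1 (n - 1)))
  have hgap_zero :
      (n + 1 : ℝ) * fitLoss a1 a2 0 b2 n - n * fitLoss a1 a2 0 b2 (n - 1) = b2 ^ 2 := by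
    simp only [fitLoss_zero_left]
    ring
  simpa only [hgap_zero] using (hgap.tendsto 0).mono_left nhdsWithin_le_nhds

end LeastSquares

end

open LeastSquares

theorem stmt_6_general (a1 a2 b2 : ℝ) (ha1 : a1 ≠ 0) (hb2 : b2 ≠ 0)
    (n : ℕ)
    (h : ℕ → ℝ → ℝ)
    (hh : ∀ (m : ℕ) (b1 : ℝ), h m b1 = (a1 * a2 + m * b1 * b2) / (a1 ^ 2 + m * b1 ^ 2))
    (L : ℕ → ℝ → ℝ)
    (hL : ∀ (m : ℕ) (b1 : ℝ), L m b1 = (b1 * h m b1 - b2) ^ 2) :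
    Filter.Tendsto (fun b1 : ℝ => (n + 1 : ℝ) * L n b1 - (n : ℝ) * L (n - 1) b1)
        (nhdsWithin 0 (Set.Ioi 0)) (nhds (b2 ^ 2)) ∧
    0 < b2 ^ 2 ∧
    ∃ b1 : ℝ, 0 < b1 ∧ 0 < (n + 1 : ℝ) * L n b1 - (n : ℝ) * L (n - 1) b1 := by
  obtain rfl : L = fun m b1 => fitLoss a1 a2 b1 b2 m := by
    funext m b1
    rw [hL, hh, fitLoss, fitSlope]
  have htend := tendsto_fitLoss_gap_nhdsGT a2 b2 ha1 n
  have hpos : 0 < b2 ^ 2 := by positivity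
  obtain ⟨b1, hgap, hb1⟩ := ((htend.eventually_const_lt hpos).and self_mem_nhdsWithin).exists
  exact ⟨htend, hpos, b1, hb1, hgap⟩

/-- With `h m b1 = (a1 a2 + m b1 b2)/(a1² + m b1²)` (the no-intercept
least-squares fit of one point `(a1,a2)` and `m` copies of `(b1,b2)`) and
`L m b1 = (b1 · h m b1 - b2)²`, we have
`lim_{b1 → 0⁺} [(n+1) L n b1 - n L (n-1) b1] = b2² > 0`; consequently, for every `n ≥ 1`
there exists `b1 > 0` with `(n+1) L n b1 - n L (n-1) b1 > 0`. -/
theorem stmt_6 (a1 a2 b2 : ℝ) (ha1 : a1 ≠ 0) (ha2 : a2 ≠ 0) (hb2 : b2 ≠ 0)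
    (n : ℕ) (hn : 1 ≤ n)
    (h : ℕ → ℝ → ℝ)
    (hh : ∀ (m : ℕ) (b1 : ℝ), h m b1 = (a1 * a2 + m * b1 * b2) / (a1 ^ 2 + m * b1 ^ 2))
    (L : ℕ → ℝ → ℝ)
    (hL : ∀ (m : ℕ) (b1 : ℝ), L m b1 = (b1 * h m b1 - b2) ^ 2) :
    Filter.Tendsto (fun b1 : ℝ => (n + 1 : ℝ) * L n b1 - (n : ℝ) * L (n - 1) b1)
        (nhdsWithin 0 (Set.Ioi 0)) (nhds (b2 ^ 2)) ∧
    0 < b2 ^ 2 ∧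
    ∃ b1 : ℝ, 0 < b1 ∧ 0 < (n + 1 : ℝ) * L n b1 - (n : ℝ) * L (n - 1) b1 :=
  stmt_6_general a1 a2 b2 ha1 hb2 n h hh L hL
end

section
/- For every integer $n \geq 1$ there exists a distribution $D$ supported on two points of $\mathbb{R} \times \mathbb{R}$ (with inputs in any fixed open ball around $0$) such that the least-squares linear learner without intercept, $A(S) = \arg\min_h \frac{1}{|S|}\sum_{(x,y)\in S}(xh-y)^2$ (minimum-norm solution when underdetermined), satisfies $\mathbb{E}_{S_{n+1}\sim D^{n+1}} R_D(A(S_{n+1})) > \mathbb{E}_{S_n \sim D^n} R_D(A(S_n))$, where $R_D(h) = \mathbb{E}_{(x,y)\sim D}(xh - y)^2$. -/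
/-!
Put mass `w` on `s = (a q, 1)` and `1 - w` on `t = (q, 1)`, with `a = 10 n` and `w = 1 / (100 a²)`;
the scale `q` puts the inputs into the ball and affects nothing else. The least-squares fit, and
hence its risk, depends only on the number `k` of copies of `s` in the sample. Couple a sample of
size `n + 1` with its first `n` points. If these contain no copy of `s` (probability
`(1 - w) ^ n ≈ 1`), the `n`-point fit interpolates `t` and has small risk, while with probability
`w` the extra point is `s`, which drags the fit far away because `a² ≫ n`: the risk grows by a
constant, so the expected risk by order `w`. If `k ≥ 1` (probability at most `n w`), one more point
changes the risk by only `O(1 / a²)`, so these samples cost at most `O(n w / a²)`.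
-/

open MeasureTheory

def bernoulliWeight {ι : Type*} [Fintype ι] (w : ℝ) (σ : ι → Bool) : ℝ :=
  ∏ i, if σ i then w else 1 - w

def trueCount {ι : Type*} [Fintype ι] (σ : ι → Bool) : ℕ :=
  ∑ i, (σ i).toNat

section BernoulliWeight

variable {ι : Type*} [Fintype ι] {w : ℝ}

theorem bernoulliWeight_nonneg (hw0 : 0 ≤ w) (hw1 : w ≤ 1) (σ : ι → Bool) :
    0 ≤ bernoulliWeight w σ :=
  Finset.prod_nonneg fun i _ => by split <;> linarith

theorem sum_bernoulliWeight [DecidableEq ι] (w : ℝ) :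
    ∑ σ : ι → Bool, bernoulliWeight w σ = 1 := by
  simp only [bernoulliWeight]
  rw [← Fintype.prod_sum fun (_ : ι) (b : Bool) => if b then w else 1 - w]
  simp

theorem bernoulliWeight_const_false (w : ℝ) :
    bernoulliWeight w (fun _ : ι => false) = (1 - w) ^ Fintype.card ι := by
  simp [bernoulliWeight]

theorem sum_bernoulliWeight_mul_fin_succ {n : ℕ} (w : ℝ) (F : (Fin (n + 1) → Bool) → ℝ) :
    ∑ σ, bernoulliWeight w σ * F σ =
      ∑ σ : Fin n → Bool, bernoulliWeight w σ *
        (w * F (Fin.cons true σ) + (1 - w) * F (Fin.cons false σ)) := by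
  rw [← (Fin.consEquiv fun _ => Bool).sum_comp, Fintype.sum_prod_type, Fintype.sum_bool,
    ← Finset.sum_add_distrib]
  refine Finset.sum_congr rfl fun σ _ => ?_
  simp [Fin.consEquiv, bernoulliWeight, Fin.prod_univ_succ]
  ring

end BernoulliWeight

section TrueCount

variable {ι : Type*} [Fintype ι]

theorem trueCount_le_card (σ : ι → Bool) : trueCount σ ≤ Fintype.card ι := by
  simpa [trueCount] using Finset.sum_le_card_nsmul Finset.univ (fun i => (σ i).toNat) 1
    fun i _ => Bool.toNat_le (σ i)

theorem one_le_trueCount {σ : ι → Bool} (hσ : σ ≠ fun _ => false) : 1 ≤ trueCount σ := by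
  obtain ⟨i, hi⟩ := Function.ne_iff.mp hσ
  simp only [ne_eq, Bool.not_eq_false] at hi
  calc 1 = (σ i).toNat := by simp [hi]
    _ ≤ ∑ j, (σ j).toNat := Finset.single_le_sum (f := fun j => (σ j).toNat)
        (fun j _ => Nat.zero_le _) (Finset.mem_univ i)

theorem trueCount_const_false : trueCount (fun _ : ι => false) = 0 := by
  simp [trueCount]

theorem trueCount_cons {n : ℕ} (b : Bool) (σ : Fin n → Bool) :
    trueCount (Fin.cons b σ : Fin (n + 1) → Bool) = b.toNat + trueCount σ := by
  simp [trueCount, Fin.sum_univ_succ]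

theorem sum_ite_eq_trueCount (σ : ι → Bool) (u v : ℝ) :
    ∑ i, (if σ i then u else v) =
      trueCount σ * u + (Fintype.card ι - trueCount σ) * v := by
  have h : ∀ i, (if σ i then u else v) = v + (σ i).toNat * (u - v) := by
    intro i; cases σ i <;> simp
  simp only [h, Finset.sum_add_distrib, ← Finset.sum_mul, trueCount, Nat.cast_sum]
  simp
  ring

end TrueCount

section TwoPoint

variable {α : Type*} [MeasurableSpace α]

noncomputable def twoPoint (w : ℝ) (s t : α) : Measure α :=
  ENNReal.ofReal w • Measure.dirac s + ENNReal.ofReal (1 - w) • Measure.dirac t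

instance (w : ℝ) (s t : α) : IsFiniteMeasure (twoPoint w s t) := by
  unfold twoPoint
  constructor
  simp [ENNReal.add_lt_top]

theorem pi_twoPoint {ι : Type*} [Fintype ι] [DecidableEq ι] {w : ℝ} (hw0 : 0 ≤ w) (hw1 : w ≤ 1)
    (s t : α) :
    Measure.pi (fun _ : ι => twoPoint w s t) =
      ∑ σ : ι → Bool, ENNReal.ofReal (bernoulliWeight w σ) •
        Measure.dirac (fun i => if σ i then s else t) := by
  classical
  refine Measure.pi_eq fun E hE => ?_
  have hfactor : ∀ i, twoPoint w s t (E i) = ∑ b : Bool,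
      ENNReal.ofReal (if b then w else 1 - w) * (E i).indicator 1 (if b then s else t) := by
    intro i
    simp [twoPoint, Measure.dirac_apply' _ (hE i)]
  simp only [hfactor, Fintype.prod_sum, Measure.coe_finsetSum, Finset.sum_apply,
    Measure.smul_apply, Measure.dirac_apply' _ (MeasurableSet.univ_pi hE), smul_eq_mul]
  refine Finset.sum_congr rfl fun σ _ => ?_
  rw [bernoulliWeight, ENNReal.ofReal_prod_of_nonneg fun i _ => by split <;> linarith,
    Finset.prod_mul_distrib]
  congr 1
  simp only [Set.indicator_apply, Set.mem_univ_pi, Pi.one_apply]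
  rw [Finset.prod_boole]
  simp

variable [MeasurableSingletonClass α]

theorem integral_twoPoint {w : ℝ} (hw0 : 0 ≤ w) (hw1 : w ≤ 1) (s t : α) (f : α → ℝ) :
    ∫ z, f z ∂twoPoint w s t = w * f s + (1 - w) * f t := by
  have hint : ∀ a : α, Integrable f (Measure.dirac a) := fun a => integrable_dirac enorm_lt_top
  rw [twoPoint, integral_add_measure ((hint s).smul_measure ENNReal.ofReal_ne_top)
    ((hint t).smul_measure ENNReal.ofReal_ne_top), integral_smul_measure, integral_smul_measure,
    integral_dirac, integral_dirac, ENNReal.toReal_ofReal hw0,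
    ENNReal.toReal_ofReal (sub_nonneg.mpr hw1), smul_eq_mul, smul_eq_mul]

theorem integral_sum_smul_dirac {κ : Type*} [Fintype κ] (c : κ → ENNReal) (hc : ∀ j, c j ≠ ⊤)
    (p : κ → α) (f : α → ℝ) :
    ∫ z, f z ∂(∑ j, c j • Measure.dirac (p j)) = ∑ j, (c j).toReal * f (p j) := by
  rw [integral_finsetSum_measure fun j _ => (integrable_dirac enorm_lt_top).smul_measure (hc j)]
  simp only [integral_smul_measure, integral_dirac, smul_eq_mul]

theorem integral_pi_twoPoint {ι : Type*} [Fintype ι] [DecidableEq ι] {w : ℝ} (hw0 : 0 ≤ w)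
    (hw1 : w ≤ 1) (s t : α) (F : (ι → α) → ℝ) :
    ∫ S, F S ∂Measure.pi (fun _ : ι => twoPoint w s t) =
      ∑ σ : ι → Bool, bernoulliWeight w σ * F (fun i => if σ i then s else t) := by
  rw [pi_twoPoint hw0 hw1, integral_sum_smul_dirac _ fun _ => ENNReal.ofReal_ne_top]
  simp only [ENNReal.toReal_ofReal (bernoulliWeight_nonneg hw0 hw1 _)]

end TwoPoint

noncomputable def lsSlope {ι : Type*} [Fintype ι] (S : ι → ℝ × ℝ) : ℝ :=
  if (∑ i, (S i).1 ^ 2) = 0 then 0 else (∑ i, (S i).1 * (S i).2) / (∑ i, (S i).1 ^ 2)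

/-- The risk under `twoPoint w (a q, 1) (q, 1)` of the least-squares fit to a sample of size `m`
containing `k` copies of `(a q, 1)`; it does not depend on `q`. -/
noncomputable def lsRisk (a w m k : ℝ) : ℝ :=
  w * ((a - 1) * (m - k) / (k * a ^ 2 + (m - k))) ^ 2 +
    (1 - w) * (a * (a - 1) * k / (k * a ^ 2 + (m - k))) ^ 2

theorem lsRisk_eq {a w m k : ℝ} (hd : k * a ^ 2 + (m - k) ≠ 0) :
    w * (a * ((k * a + (m - k)) / (k * a ^ 2 + (m - k))) - 1) ^ 2 +
      (1 - w) * ((k * a + (m - k)) / (k * a ^ 2 + (m - k)) - 1) ^ 2 = lsRisk a w m k := by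
  have hU : a * ((k * a + (m - k)) / (k * a ^ 2 + (m - k))) - 1 =
      (a - 1) * (m - k) / (k * a ^ 2 + (m - k)) := by
    rw [mul_div_assoc', div_sub_one hd]; ring
  have hV : (k * a + (m - k)) / (k * a ^ 2 + (m - k)) - 1 =
      -(a * (a - 1) * k / (k * a ^ 2 + (m - k))) := by
    rw [div_sub_one hd, ← neg_div]; ring
  rw [hU, hV, neg_sq, lsRisk]

theorem trueCount_mul_sq_add_pos {ι : Type*} [Fintype ι] [Nonempty ι] {a : ℝ} (ha : 1 ≤ a)
    (σ : ι → Bool) : 0 < (trueCount σ : ℝ) * a ^ 2 + (Fintype.card ι - trueCount σ) := by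
  have hk : (trueCount σ : ℝ) ≤ Fintype.card ι := by exact_mod_cast trueCount_le_card σ
  have hcard : (0 : ℝ) < Fintype.card ι := by exact_mod_cast Fintype.card_pos
  nlinarith [mul_nonneg (Nat.cast_nonneg (trueCount σ) : (0 : ℝ) ≤ trueCount σ)
    (by nlinarith : (0 : ℝ) ≤ a ^ 2 - 1)]

theorem mul_lsSlope_twoValued {ι : Type*} [Fintype ι] [Nonempty ι] {a q : ℝ} (ha : 1 ≤ a)
    (hq : q ≠ 0) (σ : ι → Bool) :
    q * lsSlope (fun i => if σ i then (a * q, 1) else (q, 1)) =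
      (trueCount σ * a + (Fintype.card ι - trueCount σ)) /
        (trueCount σ * a ^ 2 + (Fintype.card ι - trueCount σ)) := by
  have hsq : ∑ i, ((if σ i then (a * q, (1 : ℝ)) else (q, 1)).1) ^ 2 =
      q ^ 2 * (trueCount σ * a ^ 2 + (Fintype.card ι - trueCount σ)) := by
    simp only [apply_ite Prod.fst, apply_ite (· ^ 2), sum_ite_eq_trueCount]
    ring
  have hxy : ∑ i, (if σ i then (a * q, (1 : ℝ)) else (q, 1)).1 *
      (if σ i then (a * q, (1 : ℝ)) else (q, 1)).2 =
      q * (trueCount σ * a + (Fintype.card ι - trueCount σ)) := by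
    have : ∀ i, (if σ i then (a * q, (1 : ℝ)) else (q, 1)).1 *
        (if σ i then (a * q, (1 : ℝ)) else (q, 1)).2 = if σ i then a * q else q := by
      intro i; split <;> simp
    simp only [this, sum_ite_eq_trueCount]
    ring
  have hd := trueCount_mul_sq_add_pos ha σ
  rw [lsSlope, hsq, hxy, if_neg (by positivity)]
  field_simp

theorem integral_pi_integral_lsSlope {ι : Type*} [Fintype ι] [DecidableEq ι] [Nonempty ι]
    {a q w : ℝ} (ha : 1 ≤ a) (hq : q ≠ 0) (hw0 : 0 ≤ w) (hw1 : w ≤ 1) :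
    ∫ S, (∫ z, (z.1 * lsSlope S - z.2) ^ 2 ∂twoPoint w (a * q, 1) (q, 1))
        ∂Measure.pi (fun _ : ι => twoPoint w (a * q, 1) (q, 1)) =
      ∑ σ : ι → Bool, bernoulliWeight w σ * lsRisk a w (Fintype.card ι) (trueCount σ) := by
  rw [integral_pi_twoPoint hw0 hw1]
  refine Finset.sum_congr rfl fun σ _ => ?_
  rw [integral_twoPoint hw0 hw1, ← lsRisk_eq (trueCount_mul_sq_add_pos ha σ).ne',
    ← mul_lsSlope_twoValued ha hq σ]
  ring

section LsRisk

variable {a w m k : ℝ}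

theorem lsRisk_zero_count (hm : m ≠ 0) : lsRisk a w m 0 = w * (a - 1) ^ 2 := by
  simp [lsRisk, hm]

theorem lsRisk_nonneg (hw0 : 0 ≤ w) (hw1 : w ≤ 1) : 0 ≤ lsRisk a w m k := by
  have : 0 ≤ 1 - w := by linarith
  unfold lsRisk
  positivity

theorem sq_div_le_one {x d : ℝ} (hx : 0 ≤ x) (hxd : x ≤ d) : (x / d) ^ 2 ≤ 1 :=
  pow_le_one₀ (div_nonneg hx (hx.trans hxd)) (div_le_one_of_le₀ hxd (hx.trans hxd))

theorem lsRisk_le (ha : 1 ≤ a) (hw0 : 0 ≤ w) (hk : 0 ≤ k) (hkm : k ≤ m) :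
    lsRisk a w m k ≤ w * (a - 1) ^ 2 + 1 := by
  have hU : ((m - k) / (k * a ^ 2 + (m - k))) ^ 2 ≤ 1 :=
    sq_div_le_one (by linarith) (by nlinarith)
  have hV : (a * (a - 1) * k / (k * a ^ 2 + (m - k))) ^ 2 ≤ 1 :=
    sq_div_le_one (by positivity) (by nlinarith)
  have hsplit : ((a - 1) * (m - k) / (k * a ^ 2 + (m - k))) ^ 2 =
      (a - 1) ^ 2 * ((m - k) / (k * a ^ 2 + (m - k))) ^ 2 := by ring
  rw [lsRisk, hsplit]
  nlinarith [mul_le_mul_of_nonneg_left hU (mul_nonneg hw0 (sq_nonneg (a - 1)))]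

theorem one_sub_div_four_le_lsRisk_succ_one (hw0 : 0 ≤ w) (hw1 : w ≤ 1) (hm : 0 < m)
    (h : a ^ 2 + m ≤ 2 * a * (a - 1)) : (1 - w) / 4 ≤ lsRisk a w (m + 1) 1 := by
  have hd : 0 < a ^ 2 + m := by positivity
  have hhalf : 1 / 2 ≤ a * (a - 1) * 1 / (1 * a ^ 2 + (m + 1 - 1)) := by
    rw [show 1 * a ^ 2 + (m + 1 - 1) = a ^ 2 + m by ring, le_div_iff₀ hd]
    linarith
  have hV : 1 / 4 ≤ (a * (a - 1) * 1 / (1 * a ^ 2 + (m + 1 - 1))) ^ 2 := by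
    nlinarith
  have : 0 ≤ 1 - w := by linarith
  rw [lsRisk]
  nlinarith [mul_le_mul_of_nonneg_left hV this,
    mul_nonneg hw0 (sq_nonneg ((a - 1) * (m + 1 - 1) / (1 * a ^ 2 + (m + 1 - 1))))]

theorem sq_div_sub_sq_div_add_one_le (c : ℝ) {d : ℝ} (hd : 1 ≤ d) :
    (c / d) ^ 2 - (c / (d + 1)) ^ 2 ≤ 3 * c ^ 2 / d ^ 3 := by
  calc (c / d) ^ 2 - (c / (d + 1)) ^ 2 = c ^ 2 * (2 * d + 1) / (d ^ 2 * (d + 1) ^ 2) := by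
        field_simp; ring
    _ ≤ 3 * c ^ 2 / d ^ 3 := by
        rw [div_le_div_iff₀ (by positivity) (by positivity)]
        have : (2 * d + 1) * d ≤ 3 * (d + 1) ^ 2 := by nlinarith
        have hc2 : 0 ≤ c ^ 2 * d ^ 2 := by positivity
        nlinarith [mul_le_mul_of_nonneg_left this hc2]

theorem lsRisk_sub_lsRisk_succ_le (ha : 1 ≤ a) (hw0 : 0 ≤ w) (hw1 : w ≤ 1) (hk : 1 ≤ k)
    (hkm : k ≤ m) : lsRisk a w m k - lsRisk a w (m + 1) k ≤ 3 / a ^ 2 := by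
  set d := k * a ^ 2 + (m - k) with hd
  have hd1 : k * a ^ 2 + (m + 1 - k) = d + 1 := by ring
  have hka : k * a ^ 2 ≤ d := by linarith
  have hd_pos : 1 ≤ d := by nlinarith
  have hU : ((a - 1) * (m - k) / d) ^ 2 ≤ ((a - 1) * (m + 1 - k) / (d + 1)) ^ 2 := by
    refine pow_le_pow_left₀ (div_nonneg (by nlinarith) (by linarith)) ?_ 2
    rw [div_le_div_iff₀ (by linarith) (by linarith)]
    nlinarith [mul_nonneg (sub_nonneg.mpr ha) (by positivity : 0 ≤ k * a ^ 2)]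
  have hV : (a * (a - 1) * k / d) ^ 2 - (a * (a - 1) * k / (d + 1)) ^ 2 ≤ 3 / a ^ 2 := by
    refine (sq_div_sub_sq_div_add_one_le _ hd_pos).trans ?_
    have ha0 : 0 < a := by linarith
    rw [div_le_div_iff₀ (by positivity) (by positivity)]
    have hd3 : (k * a ^ 2) ^ 3 ≤ d ^ 3 := pow_le_pow_left₀ (by positivity) hka 3
    have h1 : (a - 1) ^ 2 ≤ a ^ 2 := by nlinarith
    have h2 : k ^ 2 ≤ k ^ 3 := by nlinarith
    calc 3 * (a * (a - 1) * k) ^ 2 * a ^ 2 = 3 * ((a - 1) ^ 2 * k ^ 2 * a ^ 4) := by ring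
      _ ≤ 3 * (a ^ 2 * k ^ 3 * a ^ 4) := by gcongr
      _ = 3 * (k * a ^ 2) ^ 3 := by ring
      _ ≤ 3 * d ^ 3 := by gcongr
  rw [lsRisk, lsRisk, ← hd, hd1]
  have : 0 ≤ 3 / a ^ 2 := by positivity
  nlinarith [mul_le_mul_of_nonneg_left hU hw0]

end LsRisk

theorem sum_mul_pos_of_dominant {ι : Type*} [Fintype ι] [DecidableEq ι] {p f : ι → ℝ} {i₀ : ι}
    {γ δ : ℝ} (hp : ∀ i, 0 ≤ p i) (hsum : ∑ i, p i = 1) (h₀ : γ ≤ f i₀)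
    (hf : ∀ i ≠ i₀, -δ ≤ f i) (hγδ : (1 - p i₀) * δ < p i₀ * γ) : 0 < ∑ i, p i * f i := by
  have hrest : ∑ i ∈ Finset.univ.erase i₀, p i = 1 - p i₀ := by
    rw [← hsum, ← Finset.add_sum_erase _ _ (Finset.mem_univ i₀)]; ring
  have hlow : -((1 - p i₀) * δ) ≤ ∑ i ∈ Finset.univ.erase i₀, p i * f i := by
    rw [← hrest, Finset.sum_mul, ← Finset.sum_neg_distrib]
    exact Finset.sum_le_sum fun i hi => by
      nlinarith [hp i, hf i (Finset.ne_of_mem_erase hi)]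
  rw [← Finset.add_sum_erase _ _ (Finset.mem_univ i₀)]
  nlinarith [mul_le_mul_of_nonneg_left h₀ (hp i₀)]

theorem lsRisk_loss_lt_gain {n : ℕ} {a w : ℝ} (hn : 1 ≤ n) (ha : 10 * n ≤ a) (hw0 : 0 < w)
    (hwa : 100 * w * a ^ 2 ≤ 1) :
    (1 - (1 - w) ^ n) * (3 / a ^ 2 + w * (w * (a - 1) ^ 2 + 1)) <
      (1 - w) ^ n * (w * ((1 - w) / 4 - w * (a - 1) ^ 2)) := by
  have hn1 : (1 : ℝ) ≤ n := by exact_mod_cast hn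
  have ha10 : 10 ≤ a := by linarith
  have hsq : (a - 1) ^ 2 ≤ a ^ 2 := by nlinarith
  have hw : w ≤ 1 / 10000 := by nlinarith
  have hnw : n * w ≤ 1 / 1000 := by nlinarith
  have hP : 1 - n * w ≤ (1 - w) ^ n := by
    simpa [sub_eq_add_neg] using one_add_mul_le_pow (by linarith : (-2 : ℝ) ≤ -w) n
  have hwa' : w * (a - 1) ^ 2 ≤ 1 / 100 := by nlinarith [mul_le_mul_of_nonneg_left hsq hw0.le]
  have hγ : w / 5 ≤ w * ((1 - w) / 4 - w * (a - 1) ^ 2) := by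
    rw [div_eq_mul_one_div w]
    exact mul_le_mul_of_nonneg_left (by linarith) hw0.le
  have hδ : 3 / a ^ 2 + w * (w * (a - 1) ^ 2 + 1) ≤ 4 / a ^ 2 := by
    have : w * (w * (a - 1) ^ 2 + 1) ≤ 1 / a ^ 2 := by
      rw [le_div_iff₀ (by positivity)]; nlinarith
    linarith [show 3 / a ^ 2 + 1 / a ^ 2 = 4 / a ^ 2 by ring]
  have hna : n * (4 / a ^ 2) ≤ 1 / 25 := by
    rw [mul_div_assoc', div_le_iff₀ (by positivity)]; nlinarith
  calc (1 - (1 - w) ^ n) * (3 / a ^ 2 + w * (w * (a - 1) ^ 2 + 1))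
      ≤ n * w * (4 / a ^ 2) := by
        gcongr
        linarith
    _ ≤ w / 25 := by nlinarith
    _ < (1 - n * w) * (w / 5) := by nlinarith
    _ ≤ (1 - w) ^ n * (w * ((1 - w) / 4 - w * (a - 1) ^ 2)) := by
        gcongr
        exact pow_nonneg (by linarith) n

theorem sum_bernoulliWeight_lsRisk_lt {n : ℕ} {a w : ℝ} (hn : 1 ≤ n) (ha : 10 * n ≤ a)
    (hw0 : 0 < w) (hwa : 100 * w * a ^ 2 ≤ 1) :
    ∑ σ : Fin n → Bool, bernoulliWeight w σ * lsRisk a w n (trueCount σ) <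
      ∑ σ : Fin (n + 1) → Bool, bernoulliWeight w σ * lsRisk a w (n + 1 : ℕ) (trueCount σ) := by
  have hn1 : (1 : ℝ) ≤ n := by exact_mod_cast hn
  have ha1 : 1 ≤ a := by linarith
  have hw1 : w ≤ 1 := by nlinarith
  rw [sum_bernoulliWeight_mul_fin_succ, ← sub_pos, ← Finset.sum_sub_distrib]
  simp only [trueCount_cons, Bool.toNat_true, Bool.toNat_false, zero_add, ← mul_sub]
  push_cast
  refine sum_mul_pos_of_dominant (i₀ := fun _ => false) (γ := w * ((1 - w) / 4 - w * (a - 1) ^ 2))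
    (δ := 3 / a ^ 2 + w * (w * (a - 1) ^ 2 + 1)) (bernoulliWeight_nonneg hw0.le hw1)
    (sum_bernoulliWeight w) ?_ ?_ ?_
  · have hgain := one_sub_div_four_le_lsRisk_succ_one (a := a) hw0.le hw1
      (by positivity : (0 : ℝ) < n) (by nlinarith)
    rw [trueCount_const_false, Nat.cast_zero, add_zero, lsRisk_zero_count (by positivity),
      lsRisk_zero_count (by positivity)]
    nlinarith [mul_le_mul_of_nonneg_left hgain hw0.le]
  · intro σ hσ
    have hk1 : (1 : ℝ) ≤ trueCount σ := by exact_mod_cast one_le_trueCount hσ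
    have hkn : (trueCount σ : ℝ) ≤ n := by
      exact_mod_cast (trueCount_le_card σ).trans_eq (Fintype.card_fin n)
    have hdecay := lsRisk_sub_lsRisk_succ_le ha1 hw0.le hw1 hk1 hkn
    have hbound := lsRisk_le ha1 hw0.le (by linarith : (0 : ℝ) ≤ trueCount σ)
      (by linarith : (trueCount σ : ℝ) ≤ n + 1)
    have hnonneg := lsRisk_nonneg (a := a) (m := n + 1) (k := 1 + trueCount σ) hw0.le hw1
    nlinarith [mul_nonneg hw0.le hnonneg, mul_le_mul_of_nonneg_left hbound hw0.le]
  · rw [bernoulliWeight_const_false, Fintype.card_fin]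
    exact lsRisk_loss_lt_gain hn ha hw0 hwa

/-- Theorem 5, squared loss: For every `n ≥ 1` (and every open ball of
radius `ε` around the input `0`) there is a distribution `D` supported on two points of
`ℝ × ℝ` with inputs in the ball such that the least-squares linear learner without
intercept (minimum-norm solution in the underdetermined case) has strictly larger
expected risk with `n+1` samples than with `n`. -/
theorem stmt_7 (n : ℕ) (hn : 1 ≤ n) (ε : ℝ) (hε : 0 < ε) :
    ∃ s t : ℝ × ℝ, ∃ w : ℝ, 0 < w ∧ w < 1 ∧ |s.1| < ε ∧ |t.1| < ε ∧
      (let D : Measure (ℝ × ℝ) :=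
        ENNReal.ofReal w • Measure.dirac s + ENNReal.ofReal (1 - w) • Measure.dirac t
       let A : (m : ℕ) → (Fin m → ℝ × ℝ) → ℝ := fun m S =>
        if (∑ i, (S i).1 ^ 2) = 0 then 0
        else (∑ i, (S i).1 * (S i).2) / (∑ i, (S i).1 ^ 2)
       (∫ S : Fin n → ℝ × ℝ, (∫ z, (z.1 * A n S - z.2) ^ 2 ∂D)
          ∂(Measure.pi fun _ : Fin n => D))
        < ∫ S : Fin (n + 1) → ℝ × ℝ, (∫ z, (z.1 * A (n + 1) S - z.2) ^ 2 ∂D)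
          ∂(Measure.pi fun _ : Fin (n + 1) => D)) := by
  have hn1 : (1 : ℝ) ≤ n := by exact_mod_cast hn
  set a : ℝ := 10 * n
  set w : ℝ := 1 / (100 * a ^ 2) with hw
  set q : ℝ := ε / (2 * a) with hq
  have ha1 : 1 ≤ a := by linarith
  have hwa : 100 * w * a ^ 2 = 1 := by rw [hw]; field_simp
  have hw0 : 0 < w := by positivity
  have hw1 : w < 1 := by nlinarith
  have hq0 : 0 < q := by positivity
  have haq : a * q = ε / 2 := by rw [hq]; field_simp
  refine ⟨(a * q, 1), (q, 1), w, hw0, hw1, ?_, ?_, ?_⟩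
  · rw [haq, abs_of_pos (by positivity)]; linarith
  · rw [abs_of_pos hq0]; nlinarith
  · change ∫ S, (∫ z, (z.1 * lsSlope S - z.2) ^ 2 ∂twoPoint w (a * q, 1) (q, 1))
        ∂Measure.pi (fun _ : Fin n => twoPoint w (a * q, 1) (q, 1)) <
      ∫ S, (∫ z, (z.1 * lsSlope S - z.2) ^ 2 ∂twoPoint w (a * q, 1) (q, 1))
        ∂Measure.pi (fun _ : Fin (n + 1) => twoPoint w (a * q, 1) (q, 1))
    have : Nonempty (Fin n) := ⟨⟨0, hn⟩⟩
    rw [integral_pi_integral_lsSlope ha1 hq0.ne' hw0.le hw1.le,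
      integral_pi_integral_lsSlope ha1 hq0.ne' hw0.le hw1.le, Fintype.card_fin, Fintype.card_fin]
    exact sum_bernoulliWeight_lsRisk_lt hn le_rfl hw0 hwa.le
end

section
/- Fix $a_1\neq 0, a_2, b_2$ and let $b_1$ satisfy $0 < |b_1| < |a_1|/(n+1)$ and $a_1 b_2 \neq b_1 a_2$. Then for the absolute-loss empirical risk minimizers $h_n^1$ (fitting one copy of $(a_1,a_2)$ and $n$ copies of $(b_1,b_2)$) we have $h_n^1 = h_{n-1}^1 = a_2/a_1$ and $(n+1)|b_1 h_n^1 - b_2| - n|b_1 h_{n-1}^1 - b_2| = |\tfrac{a_2}{a_1} b_1 - b_2| > 0$. -/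
lemma aux_min (a1 a2 b1 b2 m x : ℝ) (ha : a1 ≠ 0) (hm : 0 ≤ m)
    (hlt : m * |b1| < |a1|)
    (hmin : ∀ h : ℝ, |a1 * x - a2| + m * |b1 * x - b2|
        ≤ |a1 * h - a2| + m * |b1 * h - b2|) : x = a2 / a1 := by
  set c := a2 / a1 with hc
  have h1 : a1 * c - a2 = 0 := by rw [hc]; field_simp; ring
  have key := hmin c
  rw [h1, abs_zero, zero_add] at key
  have e1 : |a1 * x - a2| = |a1| * |x - c| := by
    rw [← abs_mul]; congr 1; rw [hc]; field_simp
  have e2 : |b1 * c - b2| ≤ |b1 * x - b2| + |b1| * |x - c| := by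
    have : b1 * c - b2 = (b1 * x - b2) - b1 * (x - c) := by ring
    rw [this]
    calc |(b1 * x - b2) - b1 * (x - c)| ≤ |b1 * x - b2| + |b1 * (x - c)| :=
          abs_sub _ _
      _ = |b1 * x - b2| + |b1| * |x - c| := by rw [abs_mul]
  have h2 : m * |b1 * c - b2| ≤ m * (|b1 * x - b2| + |b1| * |x - c|) :=
    mul_le_mul_of_nonneg_left e2 hm
  have h3 : (|a1| - m * |b1|) * |x - c| ≤ 0 := by
    rw [e1] at key; nlinarith
  have h4 : |x - c| ≤ 0 := by
    nlinarith [abs_nonneg (x - c)]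
  have := abs_nonneg (x - c)
  have : |x - c| = 0 := le_antisymm h4 this
  have := abs_eq_zero.mp this
  linarith

/-- key step of Theorem 5, absolute loss: Fix `a1 ≠ 0`, `a2`, `b2`, and
let `b1` satisfy `0 < |b1| < |a1|/(n+1)` and `a1 b2 ≠ b1 a2`. Then any empirical risk
minimizers `hA` (one copy of `(a1,a2)`, `n` copies of `(b1,b2)`) and `hB` (one copy of
`(a1,a2)`, `n-1` copies of `(b1,b2)`) for the absolute loss satisfy
`hA = hB = a2/a1` and `(n+1)|b1 hA - b2| - n|b1 hB - b2| = |a2/a1 · b1 - b2| > 0`. -/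
theorem stmt_9 (a1 a2 b1 b2 : ℝ) (ha : a1 ≠ 0) (n : ℕ) (hn : 1 ≤ n)
    (hb1 : 0 < |b1|) (hb1' : |b1| < |a1| / (n + 1)) (hne : a1 * b2 ≠ b1 * a2)
    (hA hB : ℝ)
    (hAmin : ∀ h : ℝ, |a1 * hA - a2| + (n : ℝ) * |b1 * hA - b2|
        ≤ |a1 * h - a2| + (n : ℝ) * |b1 * h - b2|)
    (hBmin : ∀ h : ℝ, |a1 * hB - a2| + ((n : ℝ) - 1) * |b1 * hB - b2|
        ≤ |a1 * h - a2| + ((n : ℝ) - 1) * |b1 * h - b2|) :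
    hA = a2 / a1 ∧ hB = a2 / a1 ∧
    (n + 1 : ℝ) * |b1 * hA - b2| - (n : ℝ) * |b1 * hB - b2| = |a2 / a1 * b1 - b2| ∧
    0 < |a2 / a1 * b1 - b2| := by
  have hn1 : (1 : ℝ) ≤ (n : ℝ) := by exact_mod_cast hn
  have hnpos : (0 : ℝ) < (n : ℝ) + 1 := by linarith
  have hlt0 : ((n : ℝ) + 1) * |b1| < |a1| := by
    rw [lt_div_iff₀ hnpos] at hb1'
    calc ((n : ℝ) + 1) * |b1| = |b1| * ((n : ℝ) + 1) := by ring
      _ < |a1| := hb1'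
  have hltA : (n : ℝ) * |b1| < |a1| := by nlinarith
  have hltB : ((n : ℝ) - 1) * |b1| < |a1| := by nlinarith
  have hhA : hA = a2 / a1 := aux_min a1 a2 b1 b2 (n : ℝ) hA ha (by positivity) hltA hAmin
  have hhB : hB = a2 / a1 := aux_min a1 a2 b1 b2 ((n : ℝ) - 1) hB ha (by linarith) hltB hBmin
  have hpos : 0 < |a2 / a1 * b1 - b2| := by
    rw [abs_pos]
    intro h
    apply hne
    have : a2 / a1 * b1 = b2 := by linarith
    field_simp at this
    linarith [this]
  refine ⟨hhA, hhB, ?_, hpos⟩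
  rw [hhA, hhB]
  have : b1 * (a2 / a1) - b2 = a2 / a1 * b1 - b2 := by ring
  rw [this]; ring
end

section
/- For every integer $n \geq 1$ there exists a distribution $D$ on two points of $\mathbb{R} \times \mathbb{R}$ such that the empirical risk minimizer for the absolute loss $\ell((x,y),h) = |xh - y|$ over linear hypotheses $h \in \mathbb{R}$ without intercept satisfies $\mathbb{E}_{S_{n+1} \sim D^{n+1}} R_D(A(S_{n+1})) > \mathbb{E}_{S_n \sim D^n} R_D(A(S_n))$, where $R_D(h) = \mathbb{E}_{(x,y) \sim D} |xh - y|$. -/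
open MeasureTheory

namespace Stmt10Aux
noncomputable section




def e : Bool → ℝ × ℝ := fun b => if b then (1, 1) else (1, 0)

def D (w : ℝ) : Measure (ℝ × ℝ) :=
  ENNReal.ofReal w • Measure.dirac ((1 : ℝ), (1 : ℝ))
    + ENNReal.ofReal (1 - w) • Measure.dirac ((1 : ℝ), (0 : ℝ))

def cnt {m : ℕ} (x : Fin m → Bool) : ℕ := ∑ i, if x i then 1 else 0

lemma cnt_le {m : ℕ} (x : Fin m → Bool) : cnt x ≤ m := by
  calc cnt x ≤ ∑ _i : Fin m, 1 := Finset.sum_le_sum (fun i _ => by split <;> omega)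
  _ = m := by simp

lemma loss_eq {m : ℕ} (x : Fin m → Bool) (h : ℝ) :
    ∑ i, |(e (x i)).1 * h - (e (x i)).2|
      = (cnt x : ℝ) * |h - 1| + ((m : ℝ) - cnt x) * |h| := by
  have h1 : ∀ i : Fin m, |(e (x i)).1 * h - (e (x i)).2|
      = (if x i then (1:ℝ) else 0) * |h - 1| + (if x i then (0:ℝ) else 1) * |h| := by
    intro i
    cases hx : x i <;> simp [e]
  have h2 : (cnt x : ℝ) = ∑ i, (if x i then (1:ℝ) else 0) := by
    rw [cnt]
    push_cast
    rfl
  have h3 : ((m : ℝ) - cnt x) = ∑ i, (if x i then (0:ℝ) else 1) := by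
    have : (cnt x : ℝ) + ∑ i, (if x i then (0:ℝ) else 1) = m := by
      rw [h2, ← Finset.sum_add_distrib]
      have : ∀ i : Fin m, ((if x i then (1:ℝ) else 0) + if x i then (0:ℝ) else 1) = 1 := by
        intro i; split <;> norm_num
      simp [this]
    linarith
  simp_rw [h1]
  rw [Finset.sum_add_distrib, ← Finset.sum_mul, ← Finset.sum_mul, ← h2, ← h3]

lemma erm_val (A : (m : ℕ) → (Fin m → ℝ × ℝ) → ℝ)
    (hA1 : ∀ (m : ℕ) (S : Fin m → ℝ × ℝ) (h : ℝ),
      ∑ i, |(S i).1 * A m S - (S i).2| ≤ ∑ i, |(S i).1 * h - (S i).2|)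
    (hA2 : ∀ (m : ℕ) (S : Fin m → ℝ × ℝ) (h : ℝ),
      (∀ g : ℝ, ∑ i, |(S i).1 * h - (S i).2| ≤ ∑ i, |(S i).1 * g - (S i).2|) →
      |A m S| ≤ |h|)
    (m : ℕ) (x : Fin m → Bool) :
    A m (fun i => e (x i)) = if 2 * cnt x > m then 1 else 0 := by
  have ham : (cnt x : ℝ) ≤ (m : ℝ) := by exact_mod_cast cnt_le x
  have ha0 : (0:ℝ) ≤ (cnt x : ℝ) := by positivity
  set c := A m (fun i => e (x i)) with hc
  by_cases hcase : 2 * cnt x > m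
  · rw [if_pos hcase]
    have h2 : (m : ℝ) < 2 * (cnt x : ℝ) := by exact_mod_cast hcase
    have hstep := hA1 m (fun i => e (x i)) 1
    rw [loss_eq, loss_eq, ← hc] at hstep
    simp only [sub_self, abs_zero, abs_one, mul_zero, mul_one, zero_add] at hstep
    have h1 : 1 - |c - 1| ≤ |c| := by
      have := abs_sub_abs_le_abs_sub 1 c
      have h0 : |(1:ℝ) - c| = |c - 1| := abs_sub_comm 1 c
      rw [h0] at this
      simp only [abs_one] at this
      linarith
    have hnn : 0 ≤ |c - 1| := abs_nonneg _
    have hnn2 : 0 ≤ |c| := abs_nonneg _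
    have hfin : |c - 1| ≤ 0 := by nlinarith [mul_le_mul_of_nonneg_left h1 (by linarith : (0:ℝ) ≤ (m:ℝ) - cnt x)]
    have : |c - 1| = 0 := le_antisymm hfin hnn
    have := abs_eq_zero.mp this
    linarith
  · rw [if_neg hcase]
    push_neg at hcase
    have h2 : 2 * (cnt x : ℝ) ≤ (m : ℝ) := by exact_mod_cast hcase
    have hmin : ∀ g : ℝ, ∑ i, |(e (x i)).1 * (0:ℝ) - (e (x i)).2| ≤ ∑ i, |(e (x i)).1 * g - (e (x i)).2| := by
      intro g
      rw [loss_eq, loss_eq]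
      have h1 : 1 - |g| ≤ |g - 1| := by
        have := abs_sub_abs_le_abs_sub 1 g
        have h0 : |(1:ℝ) - g| = |g - 1| := abs_sub_comm 1 g
        rw [h0] at this
        simp only [abs_one] at this
        linarith
      have hnn : 0 ≤ |g| := abs_nonneg _
      have hnn2 : 0 ≤ |g - 1| := abs_nonneg _
      simp only [abs_zero, zero_sub, abs_neg, abs_one]
      nlinarith [mul_le_mul_of_nonneg_left h1 ha0]
    have := hA2 m (fun i => e (x i)) 0 hmin
    rw [abs_zero] at this
    have h4 := abs_nonneg c
    have : |c| = 0 := le_antisymm (hc ▸ this) h4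
    exact abs_eq_zero.mp this

lemma integral_D {w : ℝ} (hw0 : 0 ≤ w) (hw1 : w ≤ 1) (h : ℝ) :
    ∫ z, |z.1 * h - z.2| ∂(D w) = w * |h - 1| + (1 - w) * |h| := by
  have hm : Measurable fun z : ℝ × ℝ => |z.1 * h - z.2| := by measurability
  have hint : ∀ p : ℝ × ℝ, Integrable (fun z : ℝ × ℝ => |z.1 * h - z.2|) (Measure.dirac p) :=
    fun p => ⟨hm.aestronglyMeasurable, by simp [HasFiniteIntegral, lintegral_dirac]⟩
  rw [D, integral_add_measure ((hint _).smul_measure ENNReal.ofReal_ne_top)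
    ((hint _).smul_measure ENNReal.ofReal_ne_top),
    integral_smul_measure, integral_smul_measure, integral_dirac, integral_dirac,
    ENNReal.toReal_ofReal hw0, ENNReal.toReal_ofReal (by linarith)]
  simp only [smul_eq_mul, one_mul]
  norm_num






lemma e_injective : Function.Injective e := by
  intro a b hab
  cases a <;> cases b <;> simp_all [e, Prod.ext_iff]

lemma D_apply_e {w : ℝ} (b : Bool) :
    D w {e b} = ENNReal.ofReal (if b then w else 1 - w) := by
  cases b <;>
    simp [D, Measure.dirac_apply, Set.indicator, e, Prod.ext_iff]

lemma D_prob {w : ℝ} (hw0 : 0 ≤ w) (hw1 : w ≤ 1) : IsProbabilityMeasure (D w) := by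
  constructor
  rw [D]
  simp only [Measure.add_apply, Measure.smul_apply, smul_eq_mul,
    Measure.dirac_apply_of_mem (Set.mem_univ _), mul_one]
  rw [← ENNReal.ofReal_add hw0 (by linarith)]
  norm_num

lemma D_pair {w : ℝ} (hw0 : 0 ≤ w) (hw1 : w ≤ 1) :
    D w ({((1:ℝ),(1:ℝ)), ((1:ℝ),(0:ℝ))} : Set (ℝ × ℝ))ᶜ = 0 := by
  rw [D]
  simp only [Measure.add_apply, Measure.smul_apply, smul_eq_mul]
  rw [Measure.dirac_apply, Measure.dirac_apply]
  simp [Set.indicator]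

lemma pi_singleton {w : ℝ} (m : ℕ) (hw0 : 0 ≤ w) (hw1 : w ≤ 1) (x : Fin m → Bool) :
    (Measure.pi fun _ : Fin m => D w) {fun i => e (x i)}
      = ∏ i, ENNReal.ofReal (if x i then w else 1 - w) := by
  haveI : IsProbabilityMeasure (D w) := D_prob hw0 hw1
  rw [← Set.univ_pi_singleton, Measure.pi_pi]
  exact Finset.prod_congr rfl fun i _ => D_apply_e (x i)

lemma integral_pi_eq {w : ℝ} (hw0 : 0 ≤ w) (hw1 : w ≤ 1) (m : ℕ)
    (f : (Fin m → ℝ × ℝ) → ℝ) :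
    ∫ S, f S ∂(Measure.pi fun _ : Fin m => D w)
      = ∑ x : Fin m → Bool, (∏ i, if x i then w else 1 - w) * f (fun i => e (x i)) := by
  classical
  haveI : IsProbabilityMeasure (D w) := D_prob hw0 hw1
  set P := Measure.pi fun _ : Fin m => D w with hP
  haveI : IsProbabilityMeasure P := by rw [hP]; infer_instance
  set T : Set (Fin m → ℝ × ℝ) :=
    Set.pi Set.univ (fun _ => ({((1:ℝ),(1:ℝ)), ((1:ℝ),(0:ℝ))} : Set (ℝ × ℝ))) with hT
  have hpairmeas : MeasurableSet ({((1:ℝ),(1:ℝ)), ((1:ℝ),(0:ℝ))} : Set (ℝ × ℝ)) :=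
    (measurableSet_singleton _).insert _
  have hTmeas : MeasurableSet T := MeasurableSet.univ_pi fun _ => hpairmeas
  have hTfull : P T = 1 := by
    rw [hP, Measure.pi_pi]
    have h1 : D w ({((1:ℝ),(1:ℝ)), ((1:ℝ),(0:ℝ))} : Set (ℝ × ℝ)) = 1 :=
      (prob_compl_eq_zero_iff hpairmeas).mp (D_pair hw0 hw1)
    rw [Finset.prod_const, h1, one_pow]
  have hTnull : P Tᶜ = 0 := by
    rw [measure_compl hTmeas (measure_ne_top _ _), hTfull, measure_univ, tsub_self]
  set g : (Fin m → ℝ × ℝ) → ℝ := fun S =>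
    ∑ x : Fin m → Bool,
      Set.indicator ({fun i => e (x i)} : Set (Fin m → ℝ × ℝ))
        (fun _ => f (fun i => e (x i))) S with hg
  have hae : f =ᵐ[P] g := by
    have haeT : ∀ᵐ S ∂P, S ∈ T := by
      rw [ae_iff]
      convert hTnull using 2
      rfl
    filter_upwards [haeT] with S hS
    set x : Fin m → Bool := fun i => if S i = ((1:ℝ),(1:ℝ)) then true else false with hx
    have hSx : S = fun i => e (x i) := by
      funext i
      have hi := hS i (Set.mem_univ i)
      simp only [Set.mem_insert_iff, Set.mem_singleton_iff] at hi
      rcases hi with hi | hi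
      · simp [hx, hi, e]
      · simp [hx, hi, e, Prod.ext_iff]
    show f S = ∑ x' : Fin m → Bool,
      Set.indicator ({fun i => e (x' i)} : Set (Fin m → ℝ × ℝ))
        (fun _ => f (fun i => e (x' i))) S
    rw [Finset.sum_eq_single x]
    · simp [Set.indicator, ← hSx]
    · intro x' _ hx'
      apply Set.indicator_of_notMem
      simp only [Set.mem_singleton_iff]
      intro hcon
      apply hx'
      funext i
      apply e_injective
      have := congrFun (hcon.symm.trans hSx) i
      exact this
    · intro hcon
      exact absurd (Finset.mem_univ x) hcon
  rw [integral_congr_ae hae, hg, integral_finset_sum _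
    (fun x _ => (integrable_const _).indicator (measurableSet_singleton _))]
  refine Finset.sum_congr rfl fun x _ => ?_
  rw [integral_indicator_const _ (measurableSet_singleton _), hP,
    measureReal_def, pi_singleton m hw0 hw1 x, smul_eq_mul]
  congr 1
  rw [ENNReal.toReal_prod]
  exact Finset.prod_congr rfl fun i _ =>
    ENNReal.toReal_ofReal (by split <;> linarith)




def W (n : ℕ) : ℝ := if n % 2 = 0 then 1/4 else 3/4

def rsk (w : ℝ) (m k : ℕ) : ℝ := if 2 * k > m then 1 - w else w

lemma core_le (n k : ℕ) :
    rsk (W n) n k ≤ W n * rsk (W n) (n+1) (1+k) + (1 - W n) * rsk (W n) (n+1) k := by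
  rcases Nat.even_or_odd n with hpar | hpar
  · have h2 : n % 2 = 0 := Nat.even_iff.mp hpar
    have hW : W n = 1/4 := by rw [W, if_pos h2]
    rw [rsk, rsk, rsk, hW]
    split_ifs <;> first | (exfalso; omega) | norm_num
  · have h2 : n % 2 = 1 := Nat.odd_iff.mp hpar
    have hW : W n = 3/4 := by rw [W, h2]; norm_num
    rw [rsk, rsk, rsk, hW]
    split_ifs <;> first | (exfalso; omega) | norm_num

lemma core_lt (n : ℕ) (hn : 1 ≤ n) :
    rsk (W n) n ((n+1)/2)
      < W n * rsk (W n) (n+1) (1+(n+1)/2) + (1 - W n) * rsk (W n) (n+1) ((n+1)/2) := by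
  rcases Nat.even_or_odd n with hpar | hpar
  · have h2 : n % 2 = 0 := Nat.even_iff.mp hpar
    have hW : W n = 1/4 := by rw [W, if_pos h2]
    rw [rsk, rsk, rsk, hW]
    split_ifs <;> first | (exfalso; omega) | norm_num
  · have h2 : n % 2 = 1 := Nat.odd_iff.mp hpar
    have hW : W n = 3/4 := by rw [W, h2]; norm_num
    rw [rsk, rsk, rsk, hW]
    split_ifs <;> first | (exfalso; omega) | norm_num


lemma comp_cons_ite {γ : Type*} {m : ℕ} (b : Bool) (x : Fin m → Bool) (u v : γ) :
    (fun i : Fin (m+1) => if (Fin.cons b x : Fin (m+1) → Bool) i then u else v)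
      = Fin.cons (if b then u else v) (fun i => if x i then u else v) := by
  funext i
  induction i using Fin.cases with
  | zero => simp
  | succ j => simp

lemma cnt_cons {m : ℕ} (b : Bool) (x : Fin m → Bool) :
    cnt (Fin.cons b x : Fin (m+1) → Bool) = (if b then 1 else 0) + cnt x := by
  rw [cnt, cnt, comp_cons_ite b x 1 0, Fin.sum_cons]

lemma prod_ite_cons {m : ℕ} (w : ℝ) (b : Bool) (x : Fin m → Bool) :
    (∏ i, if (Fin.cons b x : Fin (m+1) → Bool) i then w else 1 - w)
      = (if b then w else 1 - w) * ∏ i, if x i then w else 1 - w := by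
  rw [comp_cons_ite b x w (1-w), Fin.prod_cons]

lemma cnt_x0 (n : ℕ) (hn : 1 ≤ n) :
    cnt (fun i : Fin n => decide (i.val < (n+1)/2)) = (n+1)/2 := by
  rw [cnt]
  have h1 : ∀ i : Fin n,
      (if (decide (i.val < (n+1)/2) : Bool) then (1:ℕ) else 0)
        = if i.val < (n+1)/2 then 1 else 0 := fun i => by simp
  simp_rw [h1]
  rw [Fin.sum_univ_eq_sum_range (fun i => if i < (n+1)/2 then (1:ℕ) else 0)]
  classical
  rw [← Finset.card_filter]
  have h2 : (Finset.range n).filter (fun i => i < (n+1)/2) = Finset.range ((n+1)/2) := by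
    ext a
    simp only [Finset.mem_filter, Finset.mem_range]
    omega
  rw [h2, Finset.card_range]





lemma key (n : ℕ) (hn : 1 ≤ n) (A : (m : ℕ) → (Fin m → ℝ × ℝ) → ℝ)
    (hA1 : ∀ (m : ℕ) (S : Fin m → ℝ × ℝ) (h : ℝ),
      ∑ i, |(S i).1 * A m S - (S i).2| ≤ ∑ i, |(S i).1 * h - (S i).2|)
    (hA2 : ∀ (m : ℕ) (S : Fin m → ℝ × ℝ) (h : ℝ),
      (∀ g : ℝ, ∑ i, |(S i).1 * h - (S i).2| ≤ ∑ i, |(S i).1 * g - (S i).2|) →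
      |A m S| ≤ |h|) :
    (∫ S : Fin n → ℝ × ℝ, (∫ z, |z.1 * A n S - z.2| ∂(D (W n)))
        ∂(Measure.pi fun _ : Fin n => D (W n)))
      < ∫ S : Fin (n + 1) → ℝ × ℝ, (∫ z, |z.1 * A (n + 1) S - z.2| ∂(D (W n)))
        ∂(Measure.pi fun _ : Fin (n + 1) => D (W n)) := by
  have hw0 : (0:ℝ) < W n := by rw [W]; split <;> norm_num
  have hw1 : W n < 1 := by rw [W]; split <;> norm_num
  rw [integral_pi_eq hw0.le hw1.le n, integral_pi_eq hw0.le hw1.le (n+1)]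
  have hval : ∀ (m : ℕ) (x : Fin m → Bool),
      (∫ z, |z.1 * A m (fun i => e (x i)) - z.2| ∂(D (W n))) = rsk (W n) m (cnt x) := by
    intro m x
    rw [erm_val A hA1 hA2 m x, integral_D hw0.le hw1.le, rsk]
    split_ifs <;> norm_num
  simp_rw [hval]
  have hsplit :
      ∑ y : Fin (n+1) → Bool, (∏ i, if y i then W n else 1 - W n) * rsk (W n) (n+1) (cnt y)
        = ∑ x : Fin n → Bool,
            (W n * ((∏ i, if x i then W n else 1 - W n) * rsk (W n) (n+1) (1 + cnt x))
              + (1 - W n) * ((∏ i, if x i then W n else 1 - W n) * rsk (W n) (n+1) (cnt x))) := by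
    have hre := Fintype.sum_equiv (Fin.consEquiv (fun _ : Fin (n+1) => Bool))
      (fun p : Bool × (Fin n → Bool) =>
        (∏ i, if (Fin.cons p.1 p.2 : Fin (n+1) → Bool) i then W n else 1 - W n)
          * rsk (W n) (n+1) (cnt (Fin.cons p.1 p.2 : Fin (n+1) → Bool)))
      (fun y : Fin (n+1) → Bool =>
        (∏ i, if y i then W n else 1 - W n) * rsk (W n) (n+1) (cnt y))
      (fun p => rfl)
    rw [← hre, Fintype.sum_prod_type_right]
    refine Finset.sum_congr rfl fun x _ => ?_
    rw [Fintype.sum_bool]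
    simp only [prod_ite_cons, cnt_cons]
    norm_num
    ring
  rw [hsplit]
  refine Finset.sum_lt_sum (fun x _ => ?_) ?_
  · have hWx : 0 < ∏ i, (if x i then W n else 1 - W n) :=
      Finset.prod_pos fun i _ => by split <;> linarith
    calc (∏ i, if x i then W n else 1 - W n) * rsk (W n) n (cnt x)
        ≤ (∏ i, if x i then W n else 1 - W n)
            * (W n * rsk (W n) (n+1) (1 + cnt x) + (1 - W n) * rsk (W n) (n+1) (cnt x)) :=
          mul_le_mul_of_nonneg_left (core_le n (cnt x)) hWx.le
      _ = _ := by ring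
  · refine ⟨fun i : Fin n => decide (i.val < (n+1)/2), Finset.mem_univ _, ?_⟩
    rw [cnt_x0 n hn]
    have hWx : 0 < ∏ i : Fin n, (if (decide (i.val < (n+1)/2) : Bool) then W n else 1 - W n) :=
      Finset.prod_pos fun i _ => by split <;> linarith
    calc (∏ i : Fin n, if (decide (i.val < (n+1)/2) : Bool) then W n else 1 - W n)
          * rsk (W n) n ((n+1)/2)
        < (∏ i : Fin n, if (decide (i.val < (n+1)/2) : Bool) then W n else 1 - W n)
            * (W n * rsk (W n) (n+1) (1 + (n+1)/2) + (1 - W n) * rsk (W n) (n+1) ((n+1)/2)) :=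
          (mul_lt_mul_iff_right₀ hWx).mpr (core_lt n hn)
      _ = _ := by ring


end
end Stmt10Aux

/-- Theorem 5, absolute loss: For every `n ≥ 1` there is a distribution
`D` on two points of `ℝ × ℝ` such that any empirical risk minimizer `A` for the absolute
loss over linear hypotheses without intercept (with minimum-norm tie-breaking) has
strictly larger expected risk with `n+1` samples than with `n`. -/
theorem stmt_10 (n : ℕ) (hn : 1 ≤ n) :
    ∃ s t : ℝ × ℝ, ∃ w : ℝ, 0 < w ∧ w < 1 ∧
      ∀ A : (m : ℕ) → (Fin m → ℝ × ℝ) → ℝ,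
        (∀ (m : ℕ) (S : Fin m → ℝ × ℝ) (h : ℝ),
          ∑ i, |(S i).1 * A m S - (S i).2| ≤ ∑ i, |(S i).1 * h - (S i).2|) →
        (∀ (m : ℕ) (S : Fin m → ℝ × ℝ) (h : ℝ),
          (∀ g : ℝ, ∑ i, |(S i).1 * h - (S i).2| ≤ ∑ i, |(S i).1 * g - (S i).2|) →
          |A m S| ≤ |h|) →
        (let D : Measure (ℝ × ℝ) :=
          ENNReal.ofReal w • Measure.dirac s + ENNReal.ofReal (1 - w) • Measure.dirac t
         (∫ S : Fin n → ℝ × ℝ, (∫ z, |z.1 * A n S - z.2| ∂D)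
            ∂(Measure.pi fun _ : Fin n => D))
          < ∫ S : Fin (n + 1) → ℝ × ℝ, (∫ z, |z.1 * A (n + 1) S - z.2| ∂D)
            ∂(Measure.pi fun _ : Fin (n + 1) => D)) := by
  refine ⟨((1:ℝ),(1:ℝ)), ((1:ℝ),(0:ℝ)), Stmt10Aux.W n, ?_, ?_, ?_⟩
  · rw [Stmt10Aux.W]; split <;> norm_num
  · rw [Stmt10Aux.W]; split <;> norm_num
  · intro A hA1 hA2
    exact Stmt10Aux.key n hn A hA1 hA2
end

section
/- For every integer $n \geq 1$ there exists a distribution $D$ on two labeled points in $\mathbb{R} \times \{-1,+1\}$ such that the linear hinge-loss empirical risk minimizer without intercept, $A(S) = \arg\min_h \frac{1}{|S|}\sum_{(x,y) \in S} \max(0, 1 - yxh)$ (minimum-norm tie-breaking), satisfies $\mathbb{E}_{S_{n+1}\sim D^{n+1}} R_D(A(S_{n+1})) > \mathbb{E}_{S_n\sim D^n} R_D(A(S_n))$ where $R_D(h) = \mathbb{E}_{(x,y)\sim D} \max(0, 1 - yxh)$. -/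
open MeasureTheory
lemma force_pos (β : ℝ) (hβ0 : 0 < β) (m : ℕ) (hm : ((m:ℝ) - 1) * β < 1)
    (S : Fin m → ℝ × ℝ) (hS : ∀ i, S i = (1,1) ∨ S i = (-β,1))
    (i0 : Fin m) (hi0 : S i0 = (1,1)) (a : ℝ)
    (herm : ∀ h : ℝ, ∑ i, max 0 (1 - (S i).2 * (S i).1 * a)
              ≤ ∑ i, max 0 (1 - (S i).2 * (S i).1 * h))
    (hnorm : ∀ h : ℝ,
      (∀ g : ℝ, ∑ i, max 0 (1 - (S i).2 * (S i).1 * h)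
          ≤ ∑ i, max 0 (1 - (S i).2 * (S i).1 * g)) → |a| ≤ |h|) : a = 1 := by
  set F : ℝ → ℝ := fun h => ∑ i, max 0 (1 - (S i).2 * (S i).1 * h) with hF
  have hm0 : 0 < m := i0.pos
  have hsplit : ∀ h : ℝ, F h = max 0 (1 - (S i0).2 * (S i0).1 * h)
      + ∑ i ∈ Finset.univ.erase i0, max 0 (1 - (S i).2 * (S i).1 * h) := by
    intro h
    rw [hF]
    exact (Finset.add_sum_erase Finset.univ _ (Finset.mem_univ i0)).symm
  have hstrict : ∀ h : ℝ, h < 1 → F 1 < F h := by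
    intro h h1
    have hcard : (Finset.univ.erase i0).card = m - 1 := by
      simp [Finset.card_erase_of_mem]
    have hsum : ∑ i ∈ Finset.univ.erase i0,
        (max 0 (1 - (S i).2 * (S i).1 * 1) - β * (1 - h))
        ≤ ∑ i ∈ Finset.univ.erase i0, max 0 (1 - (S i).2 * (S i).1 * h) := by
      apply Finset.sum_le_sum
      intro i _
      rcases hS i with hi | hi <;> rw [hi] <;> simp only
      · have e0 : max (0:ℝ) (1 - 1 * 1 * 1) = 0 := by norm_num
        rw [e0]
        have : (0:ℝ) ≤ max 0 (1 - 1 * 1 * h) := le_max_left _ _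
        nlinarith
      · have e0 : max (0:ℝ) (1 - 1 * (-β) * 1) = 1 + β := by
          rw [max_eq_right] <;> nlinarith
        rw [e0]
        have : (1:ℝ) - 1 * (-β) * h ≤ max 0 (1 - 1 * (-β) * h) := le_max_right _ _
        nlinarith
    rw [Finset.sum_sub_distrib, Finset.sum_const, hcard, nsmul_eq_mul] at hsum
    have hcm : ((m - 1 : ℕ) : ℝ) = (m : ℝ) - 1 := by
      rw [Nat.cast_sub hm0]; norm_num
    rw [hcm] at hsum
    have htop0 : max (0:ℝ) (1 - (S i0).2 * (S i0).1 * 1) = 0 := by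
      rw [hi0]; norm_num
    have htoph : 1 - h ≤ max (0:ℝ) (1 - (S i0).2 * (S i0).1 * h) := by
      rw [hi0]
      simp only
      calc (1:ℝ) - h = 1 - 1 * 1 * h := by ring
        _ ≤ max 0 (1 - 1 * 1 * h) := le_max_right _ _
    rw [hsplit h, hsplit 1, htop0]
    have hnn : 0 ≤ ((m:ℝ) - 1) := by
      have : (1:ℝ) ≤ (m:ℝ) := by exact_mod_cast hm0
      linarith
    nlinarith [hsum, htoph]
  have hmin : ∀ h : ℝ, F 1 ≤ F h := by
    intro h
    rcases lt_or_ge h 1 with h1 | h1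
    · exact (hstrict h h1).le
    · rw [hF]
      apply Finset.sum_le_sum
      intro i _
      rcases hS i with hi | hi <;> rw [hi] <;> simp only
      · have e0 : max (0:ℝ) (1 - 1 * 1 * 1) = 0 := by norm_num
        rw [e0]; exact le_max_left _ _
      · have e0 : max (0:ℝ) (1 - 1 * (-β) * 1) = 1 + β := by
          rw [max_eq_right] <;> nlinarith
        rw [e0]
        calc (1:ℝ) + β ≤ 1 - 1 * (-β) * h := by nlinarith
          _ ≤ max 0 (1 - 1 * (-β) * h) := le_max_right _ _
  have ha1 : 1 ≤ a := by
    by_contra hcon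
    push_neg at hcon
    have h1 : F 1 < F a := hstrict a hcon
    have h2 : F a ≤ F 1 := herm 1
    linarith
  have := abs_le.mp (by simpa using hnorm 1 fun g => hmin g)
  linarith [this.2]
lemma force_neg (β : ℝ) (hβ0 : 0 < β) (m : ℕ) (hm0 : 0 < m)
    (S : Fin m → ℝ × ℝ) (hS : ∀ i, S i = (-β,1)) (a : ℝ)
    (herm : ∀ h : ℝ, ∑ i, max 0 (1 - (S i).2 * (S i).1 * a)
              ≤ ∑ i, max 0 (1 - (S i).2 * (S i).1 * h))
    (hnorm : ∀ h : ℝ,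
      (∀ g : ℝ, ∑ i, max 0 (1 - (S i).2 * (S i).1 * h)
          ≤ ∑ i, max 0 (1 - (S i).2 * (S i).1 * g)) → |a| ≤ |h|) :
    a = -(1/β) := by
  have hterm : ∀ (i : Fin m) (h : ℝ),
      max 0 (1 - (S i).2 * (S i).1 * h) = max 0 (1 + β * h) := by
    intro i h; rw [hS i]; ring_nf
  have hval : ∀ h : ℝ, (∑ i, max 0 (1 - (S i).2 * (S i).1 * h)) = m * max 0 (1 + β * h) := by
    intro h
    rw [Finset.sum_congr rfl (fun i _ => hterm i h)]
    simp [Finset.sum_const, nsmul_eq_mul]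
  -- -(1/β) is a minimizer
  have hminimizer : ∀ g : ℝ, (∑ i, max 0 (1 - (S i).2 * (S i).1 * (-(1/β))))
      ≤ ∑ i, max 0 (1 - (S i).2 * (S i).1 * g) := by
    intro g
    rw [hval, hval]
    have : (1:ℝ) + β * (-(1/β)) = 0 := by field_simp; norm_num
    rw [this, max_self, mul_zero]
    positivity
  have habs : |a| ≤ |(-(1/β))| := hnorm _ hminimizer
  have h0 : (m:ℝ) * max 0 (1 + β * a) ≤ 0 := by
    have := herm (-(1/β))
    rw [hval, hval] at this
    have e : (1:ℝ) + β * (-(1/β)) = 0 := by field_simp; norm_num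
    rw [e] at this
    simpa using this
  have hmpos : (0:ℝ) < m := by exact_mod_cast hm0
  have hmax0 : max 0 (1 + β * a) = 0 := by
    have h1 : (0:ℝ) ≤ max 0 (1 + β * a) := le_max_left _ _
    nlinarith
  have hle : 1 + β * a ≤ 0 := by
    by_contra hcon
    push_neg at hcon
    rw [max_eq_right hcon.le] at hmax0
    linarith
  have hβ' : (0:ℝ) < 1/β := by positivity
  rw [abs_neg, abs_of_pos hβ'] at habs
  have := abs_le.mp habs
  have h2 : a ≤ -(1/β) := by
    rw [le_neg]
    rw [div_le_iff₀ hβ0]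
    nlinarith
  linarith [this.1]
lemma integrable_dirac'' {α : Type*} [MeasurableSpace α] [MeasurableSingletonClass α]
    {f : α → ℝ} (hf : Measurable f) (x : α) : Integrable f (Measure.dirac x) :=
  ⟨hf.aestronglyMeasurable, by
    rw [HasFiniteIntegral, lintegral_dirac]
    exact ENNReal.coe_lt_top⟩

lemma exp_risk (w β : ℝ) (hw0 : 0 < w) (hw1 : w < 1) (hβ0 : 0 < β)
    (m : ℕ) (hm0 : 0 < m) (f : (Fin m → ℝ × ℝ) → ℝ)
    (hpos : ∀ S : Fin m → ℝ × ℝ, (∀ i, S i = ((1:ℝ),(1:ℝ)) ∨ S i = (-β,1)) →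
      (∃ i, S i = (1,1)) → f S = 1)
    (hneg : f (fun _ => (-β,1)) = -(1/β)) :
    (∫ S : Fin m → ℝ × ℝ, (∫ z, max 0 (1 - z.2 * z.1 * f S)
        ∂(ENNReal.ofReal w • Measure.dirac ((1:ℝ),(1:ℝ))
          + ENNReal.ofReal (1 - w) • Measure.dirac (-β,1)))
      ∂(Measure.pi fun _ : Fin m =>
          ENNReal.ofReal w • Measure.dirac ((1:ℝ),(1:ℝ))
          + ENNReal.ofReal (1 - w) • Measure.dirac (-β,1)))
    = (1-w)*(1+β) + (w*(1+1/β) - (1-w)*(1+β)) * (1-w)^m := by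
  set s : ℝ × ℝ := ((1:ℝ),(1:ℝ)) with hs
  set t : ℝ × ℝ := (-β,1) with ht
  set D : Measure (ℝ × ℝ) := ENNReal.ofReal w • Measure.dirac s
      + ENNReal.ofReal (1 - w) • Measure.dirac t with hD
  have hw1' : (0:ℝ) ≤ 1 - w := by linarith
  have hst_ne : s ≠ t := by
    rw [hs, ht]
    intro hcon
    have : (1:ℝ) = -β := congrArg Prod.fst hcon
    nlinarith
  have hDuniv : D Set.univ = 1 := by
    rw [hD]
    simp only [Measure.add_apply, Measure.smul_apply, Measure.dirac_apply_of_mem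
      (Set.mem_univ _), smul_eq_mul, mul_one]
    rw [← ENNReal.ofReal_add hw0.le hw1']
    norm_num
  haveI : IsProbabilityMeasure D := ⟨hDuniv⟩
  have hrisk : ∀ c : ℝ, (∫ z, max 0 (1 - z.2 * z.1 * c) ∂D)
      = w * max 0 (1 - c) + (1 - w) * max 0 (1 + β * c) := by
    intro c
    have hmeas : Measurable (fun z : ℝ × ℝ => max 0 (1 - z.2 * z.1 * c)) := by
      apply Measurable.max measurable_const
      apply Measurable.sub measurable_const
      exact (measurable_snd.mul measurable_fst).mul_const c
    rw [hD, integral_add_measure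
        ((integrable_dirac'' hmeas _).smul_measure ENNReal.ofReal_ne_top)
        ((integrable_dirac'' hmeas _).smul_measure ENNReal.ofReal_ne_top),
      integral_smul_measure, integral_smul_measure, integral_dirac, integral_dirac,
      ENNReal.toReal_ofReal hw0.le, ENNReal.toReal_ofReal hw1']
    rw [hs, ht]
    simp only [smul_eq_mul]
    norm_num
  set μ : Measure (Fin m → ℝ × ℝ) := Measure.pi fun _ => D with hμ
  haveI : IsProbabilityMeasure μ := by rw [hμ]; infer_instance
  set Rpos : ℝ := (1-w)*(1+β) with hRpos
  set Rneg : ℝ := w*(1+1/β) with hRneg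
  set ct : Fin m → ℝ × ℝ := fun _ => t with hct
  -- support set has full measure
  have hst : D ({s, t} : Set (ℝ × ℝ)) = 1 := by
    rw [hD]
    have hms : s ∈ ({s, t} : Set (ℝ × ℝ)) := Set.mem_insert _ _
    have hmt : t ∈ ({s, t} : Set (ℝ × ℝ)) := Set.mem_insert_of_mem _ rfl
    simp only [Measure.add_apply, Measure.smul_apply,
      Measure.dirac_apply_of_mem hms, Measure.dirac_apply_of_mem hmt, smul_eq_mul, mul_one]
    rw [← ENNReal.ofReal_add hw0.le hw1']
    norm_num
  have hstmeas : MeasurableSet ({s, t} : Set (ℝ × ℝ)) :=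
    (MeasurableSet.singleton t).insert s
  have hsupp : MeasurableSet (Set.univ.pi fun _ : Fin m => ({s, t} : Set (ℝ × ℝ))) :=
    MeasurableSet.univ_pi fun _ => hstmeas
  have hμsupp : μ (Set.univ.pi fun _ : Fin m => ({s, t} : Set (ℝ × ℝ))) = 1 := by
    rw [hμ, Measure.pi_pi]
    simp [hst]
  have hnull : μ ((Set.univ.pi fun _ : Fin m => ({s, t} : Set (ℝ × ℝ)))ᶜ) = 0 := by
    rw [measure_compl hsupp (measure_ne_top _ _), hμsupp, measure_univ, tsub_self]
  have hae : ∀ᵐ S ∂μ, ∀ i, S i ∈ ({s, t} : Set (ℝ × ℝ)) := by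
    rw [ae_iff]
    refine measure_mono_null (fun S hS => ?_) hnull
    simp only [Set.mem_setOf_eq] at hS
    simp only [Set.mem_compl_iff, Set.mem_pi, Set.mem_univ, forall_true_left]
    intro hcon
    exact hS hcon
  have hctmeas : MeasurableSet ({ct} : Set (Fin m → ℝ × ℝ)) := MeasurableSet.singleton ct
  have hgeq : ∀ᵐ S ∂μ, (∫ z, max 0 (1 - z.2 * z.1 * f S) ∂D)
      = Rpos + Set.indicator ({ct} : Set (Fin m → ℝ × ℝ)) (fun _ => Rneg - Rpos) S := by
    filter_upwards [hae] with S hSmem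
    by_cases hSt : S = ct
    · rw [hSt, Set.indicator_of_mem (Set.mem_singleton ct), hrisk, hneg]
      have h1 : max (0:ℝ) (1 - (-(1/β))) = 1 + 1/β := by
        rw [max_eq_right]; · ring
        have : (0:ℝ) < 1/β := by positivity
        linarith
      have h2 : max (0:ℝ) (1 + β * (-(1/β))) = 0 := by
        have : (1:ℝ) + β * (-(1/β)) = 0 := by field_simp; norm_num
        rw [this, max_self]
      rw [h1, h2, hRpos, hRneg]
      ring
    · rw [Set.indicator_of_notMem (by simpa using hSt)]
      have hex : ∃ i, S i = s := by
        by_contra hcon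
        push_neg at hcon
        apply hSt
        funext i
        rcases hSmem i with hi | hi
        · exact absurd hi (hcon i)
        · exact hi
      have hfS : f S = 1 := hpos S (fun i => by simpa using hSmem i) hex
      rw [hrisk, hfS]
      have h1 : max (0:ℝ) (1 - 1) = 0 := by norm_num
      have h2 : max (0:ℝ) (1 + β * 1) = 1 + β := by
        rw [max_eq_right]; · ring
        nlinarith
      rw [h1, h2, hRpos]
      ring
  rw [integral_congr_ae hgeq, integral_add (integrable_const _)
      ((integrable_const _).indicator hctmeas),
    integral_const, integral_indicator_const _ hctmeas]
  have hctset : ({ct} : Set (Fin m → ℝ × ℝ)) = Set.univ.pi fun _ : Fin m => ({t} : Set (ℝ × ℝ)) := by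
    ext S
    simp [hct, funext_iff, Set.mem_pi]
  have hDt : D ({t} : Set (ℝ × ℝ)) = ENNReal.ofReal (1 - w) := by
    rw [hD]
    have h1 : Measure.dirac s ({t} : Set (ℝ × ℝ)) = 0 := by
      rw [Measure.dirac_apply]
      simp [Set.indicator_of_notMem, hst_ne]
    have h2 : Measure.dirac t ({t} : Set (ℝ × ℝ)) = 1 :=
      Measure.dirac_apply_of_mem rfl
    simp [Measure.add_apply, h1, h2]
  have hμct : μ ({ct} : Set (Fin m → ℝ × ℝ)) = ENNReal.ofReal ((1 - w)^m) := by
    rw [hctset, hμ, Measure.pi_pi]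
    simp only [hDt, Finset.prod_const, Finset.card_univ, Fintype.card_fin]
    rw [← ENNReal.ofReal_pow hw1']
  rw [measureReal_def, measureReal_def, hμct, ENNReal.toReal_ofReal (by positivity), measure_univ, ENNReal.toReal_one,
    smul_eq_mul, smul_eq_mul]
  rw [hRpos, hRneg]
  ring

/-- Theorem 5, hinge loss: For every `n ≥ 1` there is a distribution `D`
on two labeled points in `ℝ × {-1,+1}` such that any linear hinge-loss empirical risk
minimizer without intercept (with minimum-norm tie-breaking) has strictly larger
expected hinge risk with `n+1` samples than with `n`. -/
theorem stmt_12 (n : ℕ) (hn : 1 ≤ n) :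
    ∃ s t : ℝ × ℝ, (s.2 = 1 ∨ s.2 = -1) ∧ (t.2 = 1 ∨ t.2 = -1) ∧
    ∃ w : ℝ, 0 < w ∧ w < 1 ∧
      ∀ A : (m : ℕ) → (Fin m → ℝ × ℝ) → ℝ,
        (∀ (m : ℕ) (S : Fin m → ℝ × ℝ) (h : ℝ),
          ∑ i, max 0 (1 - (S i).2 * (S i).1 * A m S)
            ≤ ∑ i, max 0 (1 - (S i).2 * (S i).1 * h)) →
        (∀ (m : ℕ) (S : Fin m → ℝ × ℝ) (h : ℝ),
          (∀ g : ℝ, ∑ i, max 0 (1 - (S i).2 * (S i).1 * h)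
              ≤ ∑ i, max 0 (1 - (S i).2 * (S i).1 * g)) →
          |A m S| ≤ |h|) →
        (let D : Measure (ℝ × ℝ) :=
          ENNReal.ofReal w • Measure.dirac s + ENNReal.ofReal (1 - w) • Measure.dirac t
         (∫ S : Fin n → ℝ × ℝ, (∫ z, max 0 (1 - z.2 * z.1 * A n S) ∂D)
            ∂(Measure.pi fun _ : Fin n => D))
          < ∫ S : Fin (n + 1) → ℝ × ℝ, (∫ z, max 0 (1 - z.2 * z.1 * A (n + 1) S) ∂D)
            ∂(Measure.pi fun _ : Fin (n + 1) => D)) := by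
  have hN1 : (1:ℝ) ≤ (n:ℝ) := by exact_mod_cast hn
  set β : ℝ := 1/((n:ℝ)+2) with hβ
  set w : ℝ := 1/((n:ℝ)+4) with hw
  have hβ0 : 0 < β := by rw [hβ]; positivity
  have hw0 : 0 < w := by rw [hw]; positivity
  have hw1 : w < 1 := by
    rw [hw, div_lt_one (by linarith)]
    linarith
  refine ⟨((1:ℝ),(1:ℝ)), (-β,(1:ℝ)), Or.inl rfl, Or.inl rfl, w, hw0, hw1, ?_⟩
  intro A herm hmin
  intro D
  have hDe : D = ENNReal.ofReal w • Measure.dirac ((1:ℝ),(1:ℝ))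
      + ENNReal.ofReal (1 - w) • Measure.dirac (-β,(1:ℝ)) := rfl
  have hforce_pos : ∀ (m : ℕ), m ≤ n + 1 → ∀ S : Fin m → ℝ × ℝ,
      (∀ i, S i = ((1:ℝ),(1:ℝ)) ∨ S i = (-β,1)) → (∃ i, S i = (1,1)) → A m S = 1 := by
    rintro m hm S hS ⟨i0, hi0⟩
    refine force_pos β hβ0 m ?_ S hS i0 hi0 (A m S) (herm m S) (hmin m S)
    have hmn : (m:ℝ) ≤ (n:ℝ) + 1 := by exact_mod_cast hm
    rw [hβ, mul_one_div, div_lt_one (by linarith)]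
    linarith
  have hforce_neg : ∀ (m : ℕ), 0 < m → A m (fun _ => (-β,1)) = -(1/β) := by
    intro m hm0
    exact force_neg β hβ0 m hm0 _ (fun i => rfl) _ (herm m _) (hmin m _)
  rw [exp_risk w β hw0 hw1 hβ0 n hn (A n)
      (fun S hS hex => hforce_pos n (Nat.le_succ n) S hS hex)
      (hforce_neg n hn),
    exp_risk w β hw0 hw1 hβ0 (n+1) (Nat.succ_pos n) (A (n+1))
      (fun S hS hex => hforce_pos (n+1) le_rfl S hS hex)
      (hforce_neg (n+1) (Nat.succ_pos n))]
  have h1β : 1/β = (n:ℝ) + 2 := by rw [hβ, one_div_one_div]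
  have hkey : w * (1 + 1/β) - (1-w) * (1+β) < 0 := by
    rw [h1β, hβ, hw]
    rw [sub_neg]
    have h2 : (0:ℝ) < (n:ℝ) + 2 := by linarith
    have h4 : (0:ℝ) < (n:ℝ) + 4 := by linarith
    rw [show (1:ℝ) - 1/((n:ℝ)+4) = ((n:ℝ)+3)/((n:ℝ)+4) by field_simp; ring,
      show (1:ℝ) + 1/((n:ℝ)+2) = ((n:ℝ)+3)/((n:ℝ)+2) by field_simp; ring,
      show (1:ℝ)/((n:ℝ)+4) * (1+((n:ℝ)+2)) = ((n:ℝ)+3)/((n:ℝ)+4) by field_simp; ring,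
      div_mul_div_comm, div_lt_div_iff₀ h4 (by positivity)]
    nlinarith
  have hpow : (1-w)^(n+1) < (1-w)^n :=
    pow_lt_pow_right_of_lt_one₀ (by linarith) (by linarith) (Nat.lt_succ_self n)
  nlinarith [mul_lt_mul_of_neg_left hpow hkey]
end

section
/- Let $a \neq 0$ be fixed and $n \geq 1$. With negative log-likelihood loss $\ell(b, \sigma) = \log\sigma + \frac{b^2}{2\sigma^2} + \frac{1}{2}\log(2\pi)$ for the centered Gaussian model, define $\sigma_{n+1,0}(b) = |b|$ (MLE from $n+1$ copies of $b$), $\sigma_{n,1}(b) = \sqrt{\frac{a^2 + n b^2}{n+1}}$ (MLE from one $a$ and $n$ copies of $b$), and $\sigma_{n-1,1}(b) = \sqrt{\frac{a^2 + (n-1)b^2}{n}}$. Then $\lim_{b \to 0^+}\big[-\ell(b,\sigma_{n+1,0}(b)) + (n+1)\ell(b,\sigma_{n,1}(b)) - n\ell(b,\sigma_{n-1,1}(b))\big] = +\infty$; in particular for every $n$ there exists $b > 0$ making this expression strictly positive. -/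
/-!
At the variance estimate `σ = |b|` fitted to copies of `b` alone, the Gaussian loss equals
`log |b| + 1/2 + log (2π) / 2`, which tends to `-∞` as `b → 0`. The other two estimates
involve the fixed observation `a ≠ 0`, so they stay bounded away from `0` and their losses are
continuous at `b = 0`. Hence the combination tends to `+∞`.
-/

open Filter Real Topology

noncomputable def gaussianNLL (b σ : ℝ) : ℝ :=
  log σ + b ^ 2 / (2 * σ ^ 2) + log (2 * π) / 2

lemma gaussianNLL_abs_self {b : ℝ} (hb : b ≠ 0) :
    gaussianNLL b |b| = log b + (1 / 2 + log (2 * π) / 2) := by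
  have hb2 : b ^ 2 ≠ 0 := pow_ne_zero 2 hb
  rw [gaussianNLL, log_abs, sq_abs]
  field_simp
  ring

lemma tendsto_gaussianNLL_abs_self :
    Tendsto (fun b => gaussianNLL b |b|) (𝓝[≠] 0) atBot := by
  refine (tendsto_log_nhdsNE_zero.atBot_add (tendsto_const_nhds (x := 1 / 2 + log (2 * π) / 2))).congr' ?_
  filter_upwards [self_mem_nhdsWithin] with b hb
  exact (gaussianNLL_abs_self hb).symm

lemma continuousAt_gaussianNLL {σ : ℝ → ℝ} {x : ℝ} (hσ : ContinuousAt σ x) (hσx : σ x ≠ 0) :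
    ContinuousAt (fun b => gaussianNLL b (σ b)) x := by
  unfold gaussianNLL
  have hden : 2 * σ x ^ 2 ≠ 0 := by positivity
  exact ((hσ.log hσx).add ((continuousAt_id.pow 2).div ((hσ.pow 2).const_mul 2) hden)).add
    continuousAt_const

lemma continuousAt_gaussianNLL_sqrt {q : ℝ → ℝ} {x : ℝ} (hq : ContinuousAt q x) (hqx : 0 < q x) :
    ContinuousAt (fun b => gaussianNLL b √(q b)) x :=
  continuousAt_gaussianNLL (continuous_sqrt.continuousAt.comp hq) (sqrt_pos.mpr hqx).ne'

/-- key computation of Theorem 6: With the centered-Gaussian negative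
log-likelihood loss `ℓ b σ = log σ + b²/(2σ²) + (1/2)log(2π)` and the ML estimates
`σ_{n+1,0}(b) = |b|`, `σ_{n,1}(b) = √((a² + n b²)/(n+1))`,
`σ_{n-1,1}(b) = √((a² + (n-1) b²)/n)` (for fixed `a ≠ 0`), the expression
`-ℓ(b,σ_{n+1,0}(b)) + (n+1) ℓ(b,σ_{n,1}(b)) - n ℓ(b,σ_{n-1,1}(b))` tends to `+∞` as
`b → 0⁺`; in particular there exists `b > 0` making it strictly positive. -/
theorem stmt_14 (a : ℝ) (ha : a ≠ 0) (n : ℕ) (hn : 1 ≤ n)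
    (ℓ : ℝ → ℝ → ℝ)
    (hℓ : ∀ b σ : ℝ, ℓ b σ = Real.log σ + b ^ 2 / (2 * σ ^ 2) + Real.log (2 * Real.pi) / 2)
    (F : ℝ → ℝ)
    (hF : ∀ b : ℝ, F b = -ℓ b |b|
        + (n + 1 : ℝ) * ℓ b (Real.sqrt ((a ^ 2 + n * b ^ 2) / (n + 1)))
        - (n : ℝ) * ℓ b (Real.sqrt ((a ^ 2 + ((n : ℝ) - 1) * b ^ 2) / n))) :
    Filter.Tendsto F (nhdsWithin 0 (Set.Ioi 0)) Filter.atTop ∧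
    ∃ b : ℝ, 0 < b ∧ 0 < F b := by
  obtain rfl : ℓ = gaussianNLL := funext₂ hℓ
  have hnpos : (0 : ℝ) < n := by exact_mod_cast hn
  have hsingular : Tendsto (fun b => -gaussianNLL b |b|) (𝓝[>] 0) atTop :=
    tendsto_neg_atBot_atTop.comp (tendsto_gaussianNLL_abs_self.mono_left (nhdsGT_le_nhdsNE 0))
  have hregular : ContinuousAt (fun b => (n + 1 : ℝ) * gaussianNLL b √((a ^ 2 + n * b ^ 2) / (n + 1))
      - n * gaussianNLL b √((a ^ 2 + ((n : ℝ) - 1) * b ^ 2) / n)) 0 := by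
    refine ((continuousAt_gaussianNLL_sqrt ?_ ?_).const_mul _).sub
      ((continuousAt_gaussianNLL_sqrt ?_ ?_).const_mul _)
    all_goals first | fun_prop | (simp only [ne_eq, OfNat.ofNat_ne_zero, not_false_eq_true,
      zero_pow, mul_zero, add_zero]; positivity)
  have hT : Tendsto F (𝓝[>] 0) atTop := by
    rw [show F = _ from funext fun b => (hF b).trans (add_sub_assoc _ _ _)]
    exact hsingular.atTop_add hregular.continuousWithinAt
  obtain ⟨b, hFb, hb⟩ := ((hT.eventually_gt_atTop 0).and self_mem_nhdsWithin).exists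
  exact ⟨hT, b, hb, hFb⟩
end

section
/- For every integer $n \geq 1$ there exists a distribution $D$ supported on two points of $\mathbb{R}$ such that maximum-likelihood estimation of the variance of a centered one-dimensional Gaussian (hypotheses $h_\sigma(z) = (2\pi\sigma^2)^{-1/2}e^{-z^2/(2\sigma^2)}$, loss $= $ negative log-likelihood, estimator $\hat\sigma_n^2 = \frac{1}{n}\sum_{i=1}^n z_i^2$) satisfies $\mathbb{E}_{S_{n+1}\sim D^{n+1}} R_D(\hat\sigma_{n+1}) > \mathbb{E}_{S_n\sim D^n} R_D(\hat\sigma_n)$, where $R_D(\sigma) = \mathbb{E}_{z \sim D}[\log\sigma + \frac{z^2}{2\sigma^2} + \frac{1}{2}\log 2\pi]$. -/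
open MeasureTheory


noncomputable def muB (w : ℝ) : Measure Bool :=
  ENNReal.ofReal w • Measure.dirac true + ENNReal.ofReal (1 - w) • Measure.dirac false

lemma map_muB (a b w : ℝ) :
    (muB w).map (fun z => if z then a else b) =
      ENNReal.ofReal w • Measure.dirac a + ENNReal.ofReal (1 - w) • Measure.dirac b := by
  rw [muB, Measure.map_add _ _ (measurable_of_countable _), Measure.map_smul, Measure.map_smul,
    Measure.map_dirac' (measurable_of_countable _), Measure.map_dirac' (measurable_of_countable _)]
  simp

instance muB_finite (w : ℝ) : IsFiniteMeasure (muB w) := by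
  constructor
  rw [muB]
  simp [lt_top_iff_ne_top]

lemma mix_finite (a b w : ℝ) :
    IsFiniteMeasure (ENNReal.ofReal w • Measure.dirac a + ENNReal.ofReal (1 - w) • Measure.dirac b) := by
  constructor
  simp [lt_top_iff_ne_top, Measure.dirac_apply']

lemma muB_singleton_toReal (w : ℝ) (hw0 : 0 ≤ w) (hw1 : w ≤ 1) (z : Bool) :
    ((muB w) {z}).toReal = if z then w else 1 - w := by
  cases z <;>
    simp [muB, Measure.dirac_apply, ENNReal.toReal_ofReal, hw0, sub_nonneg.2 hw1]

lemma integral_mix (a b w : ℝ) (hw0 : 0 ≤ w) (hw1 : w ≤ 1)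
    (g : ℝ → ℝ) (hg : Measurable g) :
    (∫ z, g z ∂(ENNReal.ofReal w • Measure.dirac a + ENNReal.ofReal (1 - w) • Measure.dirac b))
      = w * g a + (1 - w) * g b := by
  rw [← map_muB a b w, integral_map (measurable_of_countable _).aemeasurable
    hg.aestronglyMeasurable, integral_fintype .of_finite]
  rw [Fintype.sum_bool]
  simp [Measure.real_def, muB_singleton_toReal w hw0 hw1]

lemma integral_pi_mix (m : ℕ) (a b w : ℝ) (hw0 : 0 ≤ w) (hw1 : w ≤ 1)
    (f : (Fin m → ℝ) → ℝ) (hf : Measurable f) :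
    (∫ S, f S ∂(Measure.pi fun _ : Fin m =>
      (ENNReal.ofReal w • Measure.dirac a + ENNReal.ofReal (1 - w) • Measure.dirac b))) =
    ∑ x : Fin m → Bool,
      (∏ i, if x i then w else 1 - w) * f (fun i => if x i then a else b) := by
  haveI := mix_finite a b w
  have hmp : MeasurePreserving (fun (x : Fin m → Bool) i => if x i then a else b)
      (Measure.pi fun _ => muB w)
      (Measure.pi fun _ : Fin m =>
        (ENNReal.ofReal w • Measure.dirac a + ENNReal.ofReal (1 - w) • Measure.dirac b)) :=
    measurePreserving_pi _ _ (fun _ => ⟨measurable_of_countable _, map_muB a b w⟩)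
  rw [← hmp.map_eq, integral_map hmp.measurable.aemeasurable hf.aestronglyMeasurable,
    integral_fintype .of_finite]
  refine Finset.sum_congr rfl fun x _ => ?_
  rw [Measure.real_def, ← Set.univ_pi_singleton x, Measure.pi_pi, ENNReal.toReal_prod]
  simp only [muB_singleton_toReal w hw0 hw1, smul_eq_mul]

lemma key_sum (m : ℕ) (hm : 1 ≤ m) (b w : ℝ) (hb : 0 < b) (hw0 : 0 ≤ w) (hw1 : w ≤ 1) :
    (∫ S : Fin m → ℝ, (∫ z, (Real.log (Real.sqrt (1 / (m:ℝ) * ∑ i, S i ^ 2))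
        + z ^ 2 / (2 * Real.sqrt (1 / (m:ℝ) * ∑ i, S i ^ 2) ^ 2)
        + Real.log (2 * Real.pi) / 2)
      ∂(ENNReal.ofReal w • Measure.dirac 1 + ENNReal.ofReal (1 - w) • Measure.dirac b))
      ∂(Measure.pi fun _ : Fin m =>
        (ENNReal.ofReal w • Measure.dirac 1 + ENNReal.ofReal (1 - w) • Measure.dirac b))) =
    ∑ x : Fin m → Bool, (∏ i, if x i then w else 1 - w) *
      (Real.log (1 / (m:ℝ) * ∑ i, (if x i then (1:ℝ) else b) ^ 2) / 2
        + (w + (1 - w) * b ^ 2) / (2 * (1 / (m:ℝ) * ∑ i, (if x i then (1:ℝ) else b) ^ 2))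
        + Real.log (2 * Real.pi) / 2) := by
  haveI : NeZero m := ⟨by omega⟩
  set c : ℝ := Real.log (2 * Real.pi) / 2 with hc
  set μ : ℝ := w + (1 - w) * b ^ 2 with hμ
  have hR : ∀ σ : ℝ,
      (∫ z, (Real.log σ + z ^ 2 / (2 * σ ^ 2) + c)
        ∂(ENNReal.ofReal w • Measure.dirac 1 + ENNReal.ofReal (1 - w) • Measure.dirac b))
      = Real.log σ + μ / (2 * σ ^ 2) + c := by
    intro σ
    rw [integral_mix 1 b w hw0 hw1 _ (by fun_prop)]
    rw [hμ]
    ring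
  have hmeasf : Measurable fun S : Fin m → ℝ =>
      Real.log (Real.sqrt (1 / (m:ℝ) * ∑ i, S i ^ 2))
        + μ / (2 * Real.sqrt (1 / (m:ℝ) * ∑ i, S i ^ 2) ^ 2) + c := by
    have hv : Measurable fun S : Fin m → ℝ => 1 / (m:ℝ) * ∑ i, S i ^ 2 := by fun_prop
    exact ((Real.measurable_log.comp (Real.continuous_sqrt.measurable.comp hv)).add
      (Measurable.const_div (((Real.continuous_sqrt.measurable.comp hv).pow_const 2).const_mul 2) μ)).add measurable_const
  rw [integral_congr_ae (Filter.Eventually.of_forall fun S => hR _),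
    integral_pi_mix m 1 b w hw0 hw1 _ hmeasf]
  refine Finset.sum_congr rfl fun x _ => ?_
  have hvpos : 0 < 1 / (m:ℝ) * ∑ i, (if x i then (1:ℝ) else b) ^ 2 := by
    have h1 : (0:ℝ) < 1 / (m:ℝ) := by
      have : (0:ℝ) < m := by exact_mod_cast Nat.pos_of_ne_zero (NeZero.ne m)
      positivity
    refine mul_pos h1 (Finset.sum_pos (fun i _ => ?_) Finset.univ_nonempty)
    by_cases h : x i <;> simp [h] <;> positivity
  rw [Real.log_sqrt hvpos.le, Real.sq_sqrt hvpos.le]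


noncomputable def Gf (b w t : ℝ) : ℝ :=
  Real.log t / 2 + (w + (1 - w) * b ^ 2) / (2 * t) + Real.log (2 * Real.pi) / 2

def pf (w : ℝ) (z : Bool) : ℝ := if z then w else 1 - w

noncomputable def ef (b : ℝ) (z : Bool) : ℝ := if z then (1 : ℝ) else b

lemma sum_P (w : ℝ) (m : ℕ) : ∑ x : Fin m → Bool, ∏ i, pf w (x i) = 1 := by
  rw [← Fintype.piFinset_univ, Finset.sum_prod_piFinset]
  simp [pf]

lemma sum_succ {n : ℕ} (F : (Fin (n + 1) → Bool) → ℝ) :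
    ∑ y, F y = ∑ x : Fin n → Bool, (F (Fin.cons true x) + F (Fin.cons false x)) := by
  rw [← (Fin.consEquiv (fun _ => Bool)).sum_comp F, Fintype.sum_prod_type, Fintype.sum_bool,
    ← Finset.sum_add_distrib]
  rfl

lemma Gf_ge (b w t B : ℝ) (hB : 0 < B) (ht : B ≤ t)
    (hμ0 : 0 ≤ w + (1 - w) * b ^ 2) :
    Real.log B / 2 + Real.log (2 * Real.pi) / 2 ≤ Gf b w t := by
  have ht0 : 0 < t := lt_of_lt_of_le hB ht
  have h1 : Real.log B ≤ Real.log t := Real.log_le_log hB ht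
  have h2 : 0 ≤ (w + (1 - w) * b ^ 2) / (2 * t) := by positivity
  rw [Gf]; linarith

lemma Gf_le (b w t B : ℝ) (hB : 0 < B) (ht : B ≤ t) (ht1 : t ≤ 1)
    (hμ0 : 0 ≤ w + (1 - w) * b ^ 2) :
    Gf b w t ≤ (w + (1 - w) * b ^ 2) / (2 * B) + Real.log (2 * Real.pi) / 2 := by
  have ht0 : 0 < t := lt_of_lt_of_le hB ht
  have h1 : Real.log t ≤ 0 := Real.log_nonpos ht0.le ht1
  have h2 : (w + (1 - w) * b ^ 2) / (2 * t) ≤ (w + (1 - w) * b ^ 2) / (2 * B) :=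
    div_le_div_of_nonneg_left hμ0 (by linarith) (by linarith)
  rw [Gf]; linarith

set_option maxHeartbeats 2000000 in
lemma sums_lt (n : ℕ) (hn : 1 ≤ n) (b w : ℝ) (hb0 : 0 < b) (hwb : w = b ^ 2)
    (hb1 : b ^ 2 ≤ 1) (hwn : w ≤ 1 / (2 * (n : ℝ))) (hwn1 : w ≤ 1 / ((n : ℝ) + 1))
    (hlogw : Real.log w = -(12 * ((n : ℝ) + 1) ^ 2)) :
    (∑ x : Fin n → Bool, (∏ i, pf w (x i)) * Gf b w (1 / (n : ℝ) * ∑ i, ef b (x i) ^ 2))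
      < ∑ y : Fin (n + 1) → Bool,
          (∏ i, pf w (y i)) * Gf b w (1 / ((n + 1 : ℕ) : ℝ) * ∑ i, ef b (y i) ^ 2) := by
  have hN1 : (1 : ℝ) ≤ (n : ℝ) := by exact_mod_cast hn
  have hN0 : (0 : ℝ) < (n : ℝ) := by linarith
  set N := (n : ℝ) with hN
  have hw0 : 0 < w := by rw [hwb]; positivity
  have hw1 : w < 1 := by
    have h2 : 1 / (2 * N) < 1 := by rw [div_lt_one (by linarith)]; linarith
    linarith
  have hcast : ((n + 1 : ℕ) : ℝ) = N + 1 := by push_cast; ring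
  rw [hcast]
  have hμ0 : 0 ≤ w + (1 - w) * b ^ 2 := by nlinarith [sq_nonneg b]
  have hμ2 : w + (1 - w) * b ^ 2 ≤ 2 * w := by nlinarith [sq_nonneg b]
  set L := Real.log (N + 1) with hL
  have hL0 : 0 ≤ L := Real.log_nonneg (by linarith)
  have hLN : L ≤ N := by
    have := Real.log_le_sub_one_of_pos (show (0 : ℝ) < N + 1 by linarith)
    linarith
  have hB0 : (0 : ℝ) < 1 / (N + 1) := by positivity
  have hlogB : Real.log (1 / (N + 1)) = -L := by rw [one_div, Real.log_inv]
  -- rewrite the (n+1)-sum via Fin.cons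
  rw [sum_succ (fun y => (∏ i, pf w (y i)) * Gf b w (1 / (N + 1) * ∑ i, ef b (y i) ^ 2))]
  have hsplitT : ∀ x : Fin n → Bool,
      (∏ i, pf w ((Fin.cons true x : Fin (n + 1) → Bool) i)) *
          Gf b w (1 / (N + 1) * ∑ i, ef b ((Fin.cons true x : Fin (n + 1) → Bool) i) ^ 2)
        = (w * ∏ i, pf w (x i)) *
            Gf b w (1 / (N + 1) * (1 + ∑ i, ef b (x i) ^ 2)) := by
    intro x
    rw [Fin.prod_univ_succ, Fin.sum_univ_succ]
    simp [pf, ef]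
  have hsplitF : ∀ x : Fin n → Bool,
      (∏ i, pf w ((Fin.cons false x : Fin (n + 1) → Bool) i)) *
          Gf b w (1 / (N + 1) * ∑ i, ef b ((Fin.cons false x : Fin (n + 1) → Bool) i) ^ 2)
        = ((1 - w) * ∏ i, pf w (x i)) *
            Gf b w (1 / (N + 1) * (b ^ 2 + ∑ i, ef b (x i) ^ 2)) := by
    intro x
    rw [Fin.prod_univ_succ, Fin.sum_univ_succ]
    simp [pf, ef]
  simp only [hsplitT, hsplitF]
  rw [← sub_pos, ← Finset.sum_sub_distrib]
  set x₀ : Fin n → Bool := fun _ => false with hx₀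
  rw [← Finset.add_sum_erase _ _ (Finset.mem_univ x₀)]
  have hPx₀ : (∏ i, pf w (x₀ i)) = (1 - w) ^ n := by
    simp [x₀, pf, Finset.prod_const]
  have hsx₀ : (∑ i, ef b (x₀ i) ^ 2) = N * b ^ 2 := by
    simp [x₀, ef, Finset.sum_const, hN]
  have hPnn : ∀ x : Fin n → Bool, 0 ≤ ∏ i, pf w (x i) := by
    intro x
    refine Finset.prod_nonneg fun i _ => ?_
    by_cases h : x i <;> simp [pf, h] <;> linarith
  have hErase : ∑ x ∈ Finset.univ.erase x₀, ∏ i, pf w (x i) = 1 - (1 - w) ^ n := by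
    have h := Finset.add_sum_erase Finset.univ (fun x : Fin n → Bool => ∏ i, pf w (x i))
      (Finset.mem_univ x₀)
    rw [sum_P w n] at h
    simp only [hPx₀] at h
    linarith
  have et : 1 / (N + 1) * (b ^ 2 + N * b ^ 2) = b ^ 2 := by
    field_simp
    ring
  have et' : 1 / N * (N * b ^ 2) = b ^ 2 := by
    field_simp
  have hu : 1 / (N + 1) ≤ 1 / (N + 1) * (1 + N * b ^ 2) := by
    have h2 : 1 / (N + 1) * 1 ≤ 1 / (N + 1) * (1 + N * b ^ 2) :=
      mul_le_mul_of_nonneg_left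
        (by nlinarith [mul_nonneg hN0.le (sq_nonneg b)]) hB0.le
    rw [mul_one] at h2
    exact h2
  have hGu : -L / 2 + Real.log (2 * Real.pi) / 2
      ≤ Gf b w (1 / (N + 1) * (1 + N * b ^ 2)) := by
    have h := Gf_ge b w _ _ hB0 hu hμ0
    rw [hlogB] at h
    linarith
  have hGb : Gf b w (b ^ 2) ≤ -(12 * (N + 1) ^ 2) / 2 + 1 + Real.log (2 * Real.pi) / 2 := by
    have hb2 : (0:ℝ) < b ^ 2 := by positivity
    have h1 : (w + (1 - w) * b ^ 2) / (2 * b ^ 2) ≤ 1 := by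
      rw [div_le_one (by positivity)]
      nlinarith [hμ2]
    have h2 : Real.log (b ^ 2) = -(12 * (N + 1) ^ 2) := by
      rw [← hwb]
      exact hlogw
    rw [Gf, h2]
    linarith
  have hΔ : 6 * (N + 1) ^ 2 - L / 2 - 1
      ≤ Gf b w (1 / (N + 1) * (1 + N * b ^ 2)) - Gf b w (b ^ 2) := by linarith
  have hx₀term :
      (w * ∏ i, pf w (x₀ i)) * Gf b w (1 / (N + 1) * (1 + ∑ i, ef b (x₀ i) ^ 2)) +
          ((1 - w) * ∏ i, pf w (x₀ i)) *
            Gf b w (1 / (N + 1) * (b ^ 2 + ∑ i, ef b (x₀ i) ^ 2)) -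
          (∏ i, pf w (x₀ i)) * Gf b w (1 / N * ∑ i, ef b (x₀ i) ^ 2)
        = (1 - w) ^ n *
            (w * (Gf b w (1 / (N + 1) * (1 + N * b ^ 2)) - Gf b w (b ^ 2))) := by
    rw [hPx₀, hsx₀, et, et']
    ring
  rw [hx₀term]
  have hkey : ∀ x ∈ Finset.univ.erase x₀,
      -((L / 2 + 1) * ∏ i, pf w (x i)) ≤
        (w * ∏ i, pf w (x i)) * Gf b w (1 / (N + 1) * (1 + ∑ i, ef b (x i) ^ 2)) +
          ((1 - w) * ∏ i, pf w (x i)) *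
            Gf b w (1 / (N + 1) * (b ^ 2 + ∑ i, ef b (x i) ^ 2)) -
          (∏ i, pf w (x i)) * Gf b w (1 / N * ∑ i, ef b (x i) ^ 2) := by
    intro x hx
    obtain ⟨i0, hi0⟩ : ∃ i, x i = true := by
      by_contra h
      push_neg at h
      exact (Finset.ne_of_mem_erase hx)
        (funext fun i => by simpa using h i)
    have hs1 : 1 ≤ ∑ i, ef b (x i) ^ 2 := by
      have h := Finset.single_le_sum (f := fun i => ef b (x i) ^ 2)
        (fun i _ => sq_nonneg _) (Finset.mem_univ i0)
      simpa [ef, hi0] using h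
    have hsN : (∑ i, ef b (x i) ^ 2) ≤ N := by
      have h : ∀ i ∈ (Finset.univ : Finset (Fin n)), ef b (x i) ^ 2 ≤ 1 := by
        intro i _
        by_cases hxi : x i
        · simp [ef, hxi]
        · simpa [ef, hxi] using hb1
      have h2 := Finset.sum_le_sum h
      simpa [hN] using h2
    set s := ∑ i, ef b (x i) ^ 2 with hs
    have hNinv : (1:ℝ) / N * N = 1 := by field_simp
    have hN1inv : (1:ℝ) / (N + 1) * (N + 1) = 1 := by field_simp
    have ht1l : 1 / (N + 1) ≤ 1 / N * s := by
      have h1 : 1 / (N + 1) ≤ 1 / N := by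
        apply one_div_le_one_div_of_le hN0
        linarith
      have h2 : 1 / N * 1 ≤ 1 / N * s :=
        mul_le_mul_of_nonneg_left hs1 (one_div_pos.mpr hN0).le
      rw [mul_one] at h2
      linarith only [h1, h2]
    have ht1u : 1 / N * s ≤ 1 := by
      have h2 : 1 / N * s ≤ 1 / N * N :=
        mul_le_mul_of_nonneg_left hsN (one_div_pos.mpr hN0).le
      rw [hNinv] at h2
      exact h2
    have ht2l : 1 / (N + 1) ≤ 1 / (N + 1) * (1 + s) := by
      have h2 : 1 / (N + 1) * 1 ≤ 1 / (N + 1) * (1 + s) :=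
        mul_le_mul_of_nonneg_left (show (1:ℝ) ≤ 1 + s by linarith) hB0.le
      rw [mul_one] at h2
      exact h2
    have ht2u : 1 / (N + 1) * (1 + s) ≤ 1 := by
      have h2 : 1 / (N + 1) * (1 + s) ≤ 1 / (N + 1) * (N + 1) :=
        mul_le_mul_of_nonneg_left (show 1 + s ≤ N + 1 by linarith) hB0.le
      rw [hN1inv] at h2
      exact h2
    have ht3l : 1 / (N + 1) ≤ 1 / (N + 1) * (b ^ 2 + s) := by
      have h2 : 1 / (N + 1) * 1 ≤ 1 / (N + 1) * (b ^ 2 + s) :=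
        mul_le_mul_of_nonneg_left
          (show (1:ℝ) ≤ b ^ 2 + s by nlinarith [sq_nonneg b]) hB0.le
      rw [mul_one] at h2
      exact h2
    have ht3u : 1 / (N + 1) * (b ^ 2 + s) ≤ 1 := by
      have h2 : 1 / (N + 1) * (b ^ 2 + s) ≤ 1 / (N + 1) * (N + 1) :=
        mul_le_mul_of_nonneg_left (show b ^ 2 + s ≤ N + 1 by linarith) hB0.le
      rw [hN1inv] at h2
      exact h2
    have hg2 : -L / 2 + Real.log (2 * Real.pi) / 2 ≤ Gf b w (1 / (N + 1) * (1 + s)) := by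
      have h := Gf_ge b w _ _ hB0 ht2l hμ0
      rw [hlogB] at h
      linarith only [h]
    have hg3 : -L / 2 + Real.log (2 * Real.pi) / 2
        ≤ Gf b w (1 / (N + 1) * (b ^ 2 + s)) := by
      have h := Gf_ge b w _ _ hB0 ht3l hμ0
      rw [hlogB] at h
      linarith only [h]
    have hg1 : Gf b w (1 / N * s) ≤ 1 + Real.log (2 * Real.pi) / 2 := by
      have h := Gf_le b w _ _ hB0 ht1l ht1u hμ0
      have h2 : (w + (1 - w) * b ^ 2) / (2 * (1 / (N + 1))) ≤ 1 := by
        rw [div_le_one (by positivity)]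
        linarith only [hμ2, hwn1]
      linarith only [h, h2]
    have hφ : -(L / 2 + 1) ≤ w * Gf b w (1 / (N + 1) * (1 + s)) +
        (1 - w) * Gf b w (1 / (N + 1) * (b ^ 2 + s)) - Gf b w (1 / N * s) := by
      have hA := mul_le_mul_of_nonneg_left hg2 hw0.le
      have hBB := mul_le_mul_of_nonneg_left hg3
        (show (0:ℝ) ≤ 1 - w by linarith only [hw1])
      linarith only [hA, hBB, hg1]
    calc -((L / 2 + 1) * ∏ i, pf w (x i)) = (∏ i, pf w (x i)) * (-(L / 2 + 1)) := by ring
      _ ≤ (∏ i, pf w (x i)) * (w * Gf b w (1 / (N + 1) * (1 + s)) +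
            (1 - w) * Gf b w (1 / (N + 1) * (b ^ 2 + s)) - Gf b w (1 / N * s)) :=
          mul_le_mul_of_nonneg_left hφ (hPnn x)
      _ = _ := by ring
  have hrest : -((L / 2 + 1) * (1 - (1 - w) ^ n)) ≤
      ∑ x ∈ Finset.univ.erase x₀,
        ((w * ∏ i, pf w (x i)) * Gf b w (1 / (N + 1) * (1 + ∑ i, ef b (x i) ^ 2)) +
          ((1 - w) * ∏ i, pf w (x i)) *
            Gf b w (1 / (N + 1) * (b ^ 2 + ∑ i, ef b (x i) ^ 2)) -
          (∏ i, pf w (x i)) * Gf b w (1 / N * ∑ i, ef b (x i) ^ 2)) := by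
    have h1 := Finset.sum_le_sum hkey
    rw [Finset.sum_neg_distrib, ← Finset.mul_sum, hErase] at h1
    exact h1
  have hBer : 1 - N * w ≤ (1 - w) ^ n := by
    have h := one_add_mul_le_pow (show (-2:ℝ) ≤ -w by linarith) n
    rw [show (1:ℝ) + -w = 1 - w from by ring] at h
    rw [← hN] at h
    linarith only [h]
  have hgn0 : (0:ℝ) ≤ (1 - w) ^ n := pow_nonneg (by linarith) n
  have hgle1 : (1 - w) ^ n ≤ 1 := pow_le_one₀ (by linarith) (by linarith)
  have hNw : N * w ≤ 1 / 2 := by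
    have h := (le_div_iff₀ (show (0:ℝ) < 2 * N by linarith only [hN0])).mp hwn
    linarith only [h]
  have hghalf : (1:ℝ) / 2 ≤ (1 - w) ^ n := by linarith
  have hΔ0 : (0:ℝ) ≤ 6 * (N + 1) ^ 2 - L / 2 - 1 := by
    nlinarith [hLN, hN1, sq_nonneg (N + 1)]
  have hwΔ0 : (0:ℝ) ≤ w * (6 * (N + 1) ^ 2 - L / 2 - 1) := mul_nonneg hw0.le hΔ0
  have hterm₀ge : (1 - w) ^ n * (w * (6 * (N + 1) ^ 2 - L / 2 - 1))
      ≤ (1 - w) ^ n * (w * (Gf b w (1 / (N + 1) * (1 + N * b ^ 2)) - Gf b w (b ^ 2))) :=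
    mul_le_mul_of_nonneg_left (mul_le_mul_of_nonneg_left hΔ hw0.le) hgn0
  have hhalfle : (1:ℝ) / 2 * (w * (6 * (N + 1) ^ 2 - L / 2 - 1))
      ≤ (1 - w) ^ n * (w * (6 * (N + 1) ^ 2 - L / 2 - 1)) :=
    mul_le_mul_of_nonneg_right hghalf hwΔ0
  have hfinal : (L / 2 + 1) * N < (6 * (N + 1) ^ 2 - L / 2 - 1) / 2 := by
    nlinarith [mul_nonneg (sub_nonneg.mpr hLN) hN0.le, hN1, hL0, hLN]
  have hC := mul_lt_mul_of_pos_right hfinal hw0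
  have hD : (L / 2 + 1) * (1 - (1 - w) ^ n) ≤ (L / 2 + 1) * (N * w) :=
    mul_le_mul_of_nonneg_left (by linarith) (by linarith)
  linarith only [hterm₀ge, hrest, hhalfle, hC, hD]


/-- Theorem 6: For every `n ≥ 1` there is a distribution `D` supported on
two (nonzero) points of `ℝ` such that ML estimation of the variance of a centered
one-dimensional Gaussian (estimator `σ̂_m = √((1/m)∑ zᵢ²)`, negative log-likelihood risk
`R_D(σ) = ∫ (log σ + z²/(2σ²) + (1/2)log 2π) dD`) has strictly larger expected risk with
`n+1` samples than with `n`. -/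
theorem stmt_15 (n : ℕ) (hn : 1 ≤ n) :
    ∃ a b : ℝ, a ≠ 0 ∧ b ≠ 0 ∧ ∃ w : ℝ, 0 < w ∧ w < 1 ∧
      (let D : Measure ℝ :=
        ENNReal.ofReal w • Measure.dirac a + ENNReal.ofReal (1 - w) • Measure.dirac b
       let σhat : (m : ℕ) → (Fin m → ℝ) → ℝ := fun m S =>
        Real.sqrt ((1 / m : ℝ) * ∑ i, S i ^ 2)
       let R : ℝ → ℝ := fun σ =>
        ∫ z, (Real.log σ + z ^ 2 / (2 * σ ^ 2) + Real.log (2 * Real.pi) / 2) ∂D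
       (∫ S : Fin n → ℝ, R (σhat n S) ∂(Measure.pi fun _ : Fin n => D))
        < ∫ S : Fin (n + 1) → ℝ, R (σhat (n + 1) S)
            ∂(Measure.pi fun _ : Fin (n + 1) => D)) := by
  have hn1 : (1 : ℝ) ≤ (n : ℝ) := by exact_mod_cast hn
  set K : ℝ := 6 * ((n : ℝ) + 1) ^ 2 with hK
  have hKpos : (0 : ℝ) < K := by positivity
  set b : ℝ := Real.exp (-K) with hb
  have hb0 : 0 < b := Real.exp_pos _
  set w : ℝ := b ^ 2 with hw
  have hw0 : 0 < w := by positivity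
  have hwexp : w = Real.exp (-(2 * K)) := by
    rw [hw, hb, sq, ← Real.exp_add]
    ring_nf
  have hw1 : w < 1 := by
    rw [hwexp]
    exact Real.exp_lt_one_iff.mpr (by linarith)
  have hlogw : Real.log w = -(12 * ((n : ℝ) + 1) ^ 2) := by
    rw [hwexp, Real.log_exp, hK]
    ring
  have hb1 : b ^ 2 ≤ 1 := by rw [← hw]; exact hw1.le
  have hwle : ∀ c : ℝ, 0 < c → c ≤ 2 * K + 1 → w ≤ 1 / c := by
    intro c hc hcK
    have h1 : c ≤ Real.exp (2 * K) := le_trans hcK (by linarith [Real.add_one_le_exp (2 * K)])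
    calc w = 1 / Real.exp (2 * K) := by rw [hwexp, Real.exp_neg, one_div]
      _ ≤ 1 / c := one_div_le_one_div_of_le hc h1
  have hwn : w ≤ 1 / (2 * (n : ℝ)) := hwle _ (by linarith) (by nlinarith)
  have hwn1 : w ≤ 1 / ((n : ℝ) + 1) := hwle _ (by linarith) (by nlinarith)
  refine ⟨1, b, one_ne_zero, hb0.ne', w, hw0, hw1, ?_⟩
  dsimp only
  rw [key_sum n hn b w hb0 hw0.le hw1.le, key_sum (n + 1) (by omega) b w hb0 hw0.le hw1.le]
  have H := sums_lt n hn b w hb0 hw hb1 hwn hwn1 hlogw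
  simpa only [Gf, pf, ef] using H
end

section
/- Let $p \in [0,1]$ and for each cell of a fixed finite partition consider the majority-vote rule: given $n$ i.i.d. Bernoulli($p$) labels, predict $1$ if the sample majority is $1$ (fixed tie-breaking), else $0$. The expected zero-one risk $r(n) = \Pr(\text{majority label} \neq \text{fresh Bernoulli}(p)\text{ label})$ of the majority vote of $n$ i.i.d. Bernoulli($p$) samples is nonincreasing in $n$ along odd $n$: for odd $n$, $r(n+2) \leq r(n)$. -/
/-- Upper tail of the binomial distribution. -/
noncomputable def myT (p : ℝ) (m j : ℕ) : ℝ :=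
  ∑ k ∈ Finset.range (m+1), if j ≤ k then (m.choose k : ℝ) * p^k * (1-p)^(m-k) else 0

lemma myT_shift (p : ℝ) (m j : ℕ) :
    myT p m (j+1) = ∑ i ∈ Finset.range (m+1),
      if j ≤ i then (m.choose (i+1) : ℝ) * p^(i+1) * (1-p)^(m-(i+1)) else 0 := by
  rw [myT, Finset.sum_range_succ' _ m, Finset.sum_range_succ _ m]
  rw [if_neg (by omega : ¬ j+1 ≤ 0), Nat.choose_succ_self]
  simp only [Nat.cast_zero, zero_mul, ite_self, add_zero]
  exact Finset.sum_congr rfl fun i _ => by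
    by_cases h : j ≤ i
    · rw [if_pos (by omega), if_pos h]
    · rw [if_neg (by omega), if_neg h]

lemma myT_step (p : ℝ) (m j : ℕ) :
    myT p (m+1) (j+1) = (1-p) * myT p m (j+1) + p * myT p m j := by
  rw [myT_shift p (m+1) j, myT_shift p m j, myT, Finset.mul_sum, Finset.mul_sum,
    ← Finset.sum_add_distrib, Finset.sum_range_succ _ (m+1), Nat.choose_succ_self]
  simp only [Nat.cast_zero, zero_mul, ite_self, add_zero]
  refine Finset.sum_congr rfl fun i hi => ?_
  by_cases h : j ≤ i
  · rw [if_pos h, if_pos h, if_pos h]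
    have hch : ((m+1).choose (i+1) : ℝ) = m.choose i + m.choose (i+1) := by
      rw [Nat.choose_succ_succ]; push_cast; ring
    rw [hch]
    rcases Nat.lt_or_ge i m with hlt | hge
    · rw [show m + 1 - (i+1) = (m - (i+1)) + 1 from by omega,
        show m - i = (m - (i+1)) + 1 from by omega, pow_succ]
      ring
    · have him : i = m := by have := Finset.mem_range.mp hi; omega
      rw [him, Nat.choose_succ_self]
      simp only [Nat.cast_zero]
      rw [show m + 1 - (m+1) = 0 from by omega, show m - m = 0 from by omega, pow_succ]
      ring
  · rw [if_neg h, if_neg h, if_neg h]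
    ring

lemma myT_peel (p : ℝ) (m j : ℕ) :
    myT p m j = myT p m (j+1)
      + (if j ≤ m then (m.choose j : ℝ) * p^j * (1-p)^(m-j) else 0) := by
  rw [myT, myT]
  have hs : (if j ≤ m then (m.choose j : ℝ) * p^j * (1-p)^(m-j) else 0)
      = ∑ k ∈ Finset.range (m+1),
        if k = j then (m.choose k : ℝ) * p^k * (1-p)^(m-k) else 0 := by
    rw [Finset.sum_ite_eq' (Finset.range (m+1)) j
      (fun k => (m.choose k : ℝ) * p^k * (1-p)^(m-k))]
    by_cases h : j ≤ m
    · rw [if_pos h, if_pos (Finset.mem_range.mpr (by omega))]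
    · rw [if_neg h, if_neg (by simp [Finset.mem_range]; omega)]
  rw [hs, ← Finset.sum_add_distrib]
  refine Finset.sum_congr rfl fun k _ => ?_
  by_cases h1 : j ≤ k
  · by_cases h2 : k = j
    · rw [if_pos h1, if_neg (by omega), if_pos h2]; ring
    · rw [if_pos h1, if_pos (by omega), if_neg h2]; ring
  · rw [if_neg h1, if_neg (by omega), if_neg (by omega)]; ring

lemma myT_total (p : ℝ) (m : ℕ) :
    (∑ k ∈ Finset.range (m+1), (m.choose k : ℝ) * p^k * (1-p)^(m-k)) = 1 := by
  conv_rhs => rw [show (1:ℝ) = (p+(1-p))^m by norm_num]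
  rw [add_pow]
  exact Finset.sum_congr rfl fun k _ => by ring

/-- For the majority-vote rule on `m` i.i.d. Bernoulli(`p`) labels
(predict `1` iff strictly more than half the samples are `1`, fixed tie-breaking), the
expected zero-one risk
`r m = (1-p)·P(majority = 1) + p·P(majority = 0)` is nonincreasing along odd sample
sizes: for odd `n`, `r (n+2) ≤ r n`. -/
theorem stmt_17 (p : ℝ) (hp0 : 0 ≤ p) (hp1 : p ≤ 1)
    (r : ℕ → ℝ)
    (hr : ∀ m : ℕ, r m =
      (1 - p) * (∑ k ∈ Finset.range (m + 1),
        if m < 2 * k then (m.choose k : ℝ) * p ^ k * (1 - p) ^ (m - k) else 0)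
      + p * (∑ k ∈ Finset.range (m + 1),
        if 2 * k ≤ m then (m.choose k : ℝ) * p ^ k * (1 - p) ^ (m - k) else 0)) :
    ∀ n : ℕ, Odd n → r (n + 2) ≤ r n := by
  intro n hn
  obtain ⟨t, ht⟩ := hn
  have ht' : n = 2*t+1 := by omega
  subst ht'
  have hV : ∀ m j : ℕ, (∀ k, (m < 2*k ↔ j ≤ k)) →
      (∑ k ∈ Finset.range (m+1),
        if m < 2*k then (m.choose k : ℝ) * p^k * (1-p)^(m-k) else 0) = myT p m j := by
    intro m j hiff
    rw [myT]
    refine Finset.sum_congr rfl fun k _ => ?_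
    by_cases h : j ≤ k
    · rw [if_pos ((hiff k).mpr h), if_pos h]
    · rw [if_neg (fun hc => h ((hiff k).mp hc)), if_neg h]
  have hU : ∀ m j : ℕ, (∀ k, (m < 2*k ↔ j ≤ k)) →
      (∑ k ∈ Finset.range (m+1),
        if 2*k ≤ m then (m.choose k : ℝ) * p^k * (1-p)^(m-k) else 0) = 1 - myT p m j := by
    intro m j hiff
    have hsum : (∑ k ∈ Finset.range (m+1),
        if m < 2*k then (m.choose k : ℝ) * p^k * (1-p)^(m-k) else 0)
      + (∑ k ∈ Finset.range (m+1),
        if 2*k ≤ m then (m.choose k : ℝ) * p^k * (1-p)^(m-k) else 0) = 1 := by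
      rw [← Finset.sum_add_distrib]
      have e : (∑ k ∈ Finset.range (m+1),
          ((if m < 2*k then (m.choose k : ℝ) * p^k * (1-p)^(m-k) else 0)
            + (if 2*k ≤ m then (m.choose k : ℝ) * p^k * (1-p)^(m-k) else 0)))
          = ∑ k ∈ Finset.range (m+1), (m.choose k : ℝ) * p^k * (1-p)^(m-k) := by
        refine Finset.sum_congr rfl fun k _ => ?_
        by_cases h : 2*k ≤ m
        · rw [if_neg (by omega), if_pos h]; ring
        · rw [if_pos (by omega), if_neg h]; ring
      rw [e, myT_total]
    rw [hV m j hiff] at hsum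
    linarith
  have hrn : r (2*t+1) = (1-p) * myT p (2*t+1) (t+1) + p * (1 - myT p (2*t+1) (t+1)) := by
    rw [hr (2*t+1), hV (2*t+1) (t+1) (fun k => by omega),
      hU (2*t+1) (t+1) (fun k => by omega)]
  have hrn2 : r (2*t+1+2)
      = (1-p) * myT p (2*t+3) (t+2) + p * (1 - myT p (2*t+3) (t+2)) := by
    rw [hr (2*t+1+2)]
    rw [show 2*t+1+2 = 2*t+3 from by omega]
    rw [hV (2*t+3) (t+2) (fun k => by omega), hU (2*t+3) (t+2) (fun k => by omega)]
  have sa := myT_step p (2*t+2) (t+1)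
  rw [show 2*t+2+1 = 2*t+3 from by omega, show t+1+1 = t+2 from by omega] at sa
  have sb := myT_step p (2*t+1) (t+1)
  rw [show 2*t+1+1 = 2*t+2 from by omega, show t+1+1 = t+2 from by omega] at sb
  have sc := myT_step p (2*t+1) t
  rw [show 2*t+1+1 = 2*t+2 from by omega] at sc
  have hcsymm : ((2*t+1).choose t : ℝ) = ((2*t+1).choose (t+1) : ℝ) := by
    norm_cast
    rw [← Nat.choose_symm (show t ≤ 2*t+1 by omega), show 2*t+1-t = t+1 from by omega]
  have pc : myT p (2*t+1) t = myT p (2*t+1) (t+1)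
      + ((2*t+1).choose (t+1) : ℝ) * p^t * (1-p)^(t+1) := by
    rw [myT_peel p (2*t+1) t, if_pos (show t ≤ 2*t+1 by omega),
      show 2*t+1-t = t+1 from by omega, hcsymm]
  have pb : myT p (2*t+1) (t+1) = myT p (2*t+1) (t+2)
      + ((2*t+1).choose (t+1) : ℝ) * p^(t+1) * (1-p)^t := by
    rw [myT_peel p (2*t+1) (t+1), if_pos (show t+1 ≤ 2*t+1 by omega),
      show t+1+1 = t+2 from by omega, show 2*t+1-(t+1) = t from by omega]
  have key : r (2*t+1) - r (2*t+1+2)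
      = (1-2*p)^2 * ((2*t+1).choose (t+1) : ℝ) * (p^(t+1) * (1-p)^(t+1)) := by
    rw [hrn, hrn2, sa, sb, sc, pc, pb, pow_succ p t, pow_succ (1-p) t]
    ring
  have hnn : 0 ≤ (1-2*p)^2 * ((2*t+1).choose (t+1) : ℝ) * (p^(t+1) * (1-p)^(t+1)) := by
    have h1 : (0:ℝ) ≤ 1 - p := by linarith
    positivity
  linarith
end
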